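/- arXiv:1305.0136 — 8 statements merged into one kernel-verified Lean document; each statement's English description precedes it below -/
import Mathlib

section
/- Let A be an n×n integer matrix whose determinant is odd. Then there exists an n×n integer matrix B with det B = 1 such that every entry of B is congruent to the corresponding entry of A modulo 2. -/
open Matrix

private def liftTS {n : ℕ} (t : TransvectionStruct (Fin n) (ZMod 2)) :
    TransvectionStruct (Fin n) ℤ :=
  ⟨t.i, t.j, t.hij, (t.c.val : ℤ)⟩

private lemma map_liftTS {n : ℕ} (t : TransvectionStruct (Fin n) (ZMod 2)) :
    (Int.castRingHom (ZMod 2)).mapMatrix (liftTS t).toMatrix = t.toMatrix := by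
  obtain ⟨i, j, hij, c⟩ := t
  ext a b
  simp [liftTS, TransvectionStruct.toMatrix, transvection, Matrix.one_apply,
    Matrix.single, Matrix.of_apply, apply_ite (Int.castRingHom (ZMod 2)),
    ZMod.natCast_val, ZMod.intCast_cast, ZMod.cast_id]

private lemma map_prod_liftTS {n : ℕ} (L : List (TransvectionStruct (Fin n) (ZMod 2))) :
    (Int.castRingHom (ZMod 2)).mapMatrix ((L.map (TransvectionStruct.toMatrix ∘ liftTS)).prod)
      = (L.map TransvectionStruct.toMatrix).prod := by
  induction L with
  | nil => simp
  | cons t L ih =>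
    simp only [List.map_cons, List.prod_cons, Function.comp_apply, _root_.map_mul, ih, map_liftTS]

private lemma det_prod_liftTS {n : ℕ} (L : List (TransvectionStruct (Fin n) (ZMod 2))) :
    ((L.map (TransvectionStruct.toMatrix ∘ liftTS)).prod).det = 1 := by
  induction L with
  | nil => simp
  | cons t L ih => simp [ih]

/-- Let `A` be an `n × n` integer matrix whose determinant is odd. Then there exists an
`n × n` integer matrix `B` with `det B = 1` such that every entry of `B` is congruent to
the corresponding entry of `A` modulo `2`. -/
theorem exists_det_one_entrywise_congruent_mod_two (n : ℕ)
    (A : Matrix (Fin n) (Fin n) ℤ) (hA : Odd A.det) :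
    ∃ B : Matrix (Fin n) (Fin n) ℤ, B.det = 1 ∧ ∀ i j, B i j ≡ A i j [ZMOD 2] := by
  set A' : Matrix (Fin n) (Fin n) (ZMod 2) := (Int.castRingHom (ZMod 2)).mapMatrix A with hA'
  have hdet : A'.det = 1 := by
    have h1 : ((A.det : ZMod 2)) = A'.det := (Int.castRingHom (ZMod 2)).map_det A
    obtain ⟨k, hk⟩ := hA
    rw [← h1, hk]
    push_cast
    have h2 : (2 : ZMod 2) = 0 := rfl
    rw [h2]
    ring
  obtain ⟨L, L', D, h⟩ :=
    Matrix.Pivot.exists_list_transvec_mul_diagonal_mul_list_transvec A'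
  have hD : ∀ i, D i = 1 := by
    intro i
    have h1 : (Matrix.diagonal D).det = 1 := by
      have := hdet
      rw [h] at this
      simpa using this
    rw [Matrix.det_diagonal] at h1
    have : D i ≠ 0 := by
      intro h0
      rw [Finset.prod_eq_zero (Finset.mem_univ i) h0] at h1
      exact zero_ne_one h1
    have key : ∀ a : ZMod 2, a ≠ 0 → a = 1 := by decide
    exact key _ this
  have hDiag : Matrix.diagonal D = 1 := by
    rw [show D = fun _ => 1 from funext hD]
    simp [Matrix.diagonal_one]
  rw [hDiag, Matrix.mul_one] at h
  refine ⟨(L.map (TransvectionStruct.toMatrix ∘ liftTS)).prod *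
      (L'.map (TransvectionStruct.toMatrix ∘ liftTS)).prod, ?_, ?_⟩
  · rw [Matrix.det_mul, det_prod_liftTS, det_prod_liftTS, mul_one]
  · intro i j
    have hmap : (Int.castRingHom (ZMod 2)).mapMatrix
        ((L.map (TransvectionStruct.toMatrix ∘ liftTS)).prod *
         (L'.map (TransvectionStruct.toMatrix ∘ liftTS)).prod) = A' := by
      rw [_root_.map_mul ((Int.castRingHom (ZMod 2)).mapMatrix :
        Matrix (Fin n) (Fin n) ℤ →+* Matrix (Fin n) (Fin n) (ZMod 2)),
        map_prod_liftTS, map_prod_liftTS, ← h]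
    have hij := congrFun (congrFun hmap i) j
    simp only [RingHom.mapMatrix_apply, Matrix.map_apply, hA', Int.coe_castRingHom] at hij
    exact (ZMod.intCast_eq_intCast_iff _ _ _).mp hij
end

section
/- Let K be a simplicial complex on vertex set V, v a vertex of K, I a 1-simplex with vertex set {v₁, v₂} disjoint from V. Define wed_v(K) = (I ⋆ link_K{v}) ∪ (∂I ⋆ (K \ {v})), where K \ {v} is the induced subcomplex on V \ {v}, link_K{v} is the link of v, and ⋆ denotes simplicial join. Then the geometric realization of wed_v(K) is homeomorphic to the geometric realization of the join ∂I ⋆ K (the suspension of K). In particular, if K is a simplicial sphere then so is wed_v(K). -/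
/-!
A point of `|wed_v K|` carries masses `p, q` on the two vertices of `I`. Sending the common part
`2 min(p, q)` to `v` and the excess `|p - q|` to the pole on the side of the larger mass is a
continuous map onto `|∂I ⋆ K|`; its inverse is linear, splitting the mass `m` at `v` as `m / 2`
plus the pole mass on each vertex of `I`.

For the sphere, both `|∂I ⋆ K|` and `S^n` are continuous images of the compact space
`[-1, 1] × |K| ≅ [-1, 1] × S^{n-1}`, via `(z, x) ↦ (1 - |z|) x + (pole masses of z)` and
`(z, y) ↦ (√(1 - z²) y, z)`. Both maps identify exactly the pairs with the same `z` and either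
`|z| = 1` or the same second coordinate, so the two quotients are homeomorphic.
-/

variable {V : Type*}

/-- An (abstract) simplicial complex on the vertex set `V`: a collection of finite
subsets of `V` closed under taking subsets. -/
def IsComplex (K : Set (Finset V)) : Prop :=
  ∀ σ ∈ K, ∀ τ ⊆ σ, τ ∈ K

/-- The link of a vertex `v` in `K`. -/
def linkOf [DecidableEq V] (K : Set (Finset V)) (v : V) : Set (Finset V) :=
  {σ | v ∉ σ ∧ insert v σ ∈ K}

/-- The deletion `K \ {v}`: the induced subcomplex on the vertices other than `v`. -/
def delOf (K : Set (Finset V)) (v : V) : Set (Finset V) :=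
  {σ | σ ∈ K ∧ v ∉ σ}

/-- The simplicial wedge `wed_v(K) = (I ⋆ link_K{v}) ∪ (∂I ⋆ (K \ {v}))` of `K` at the
vertex `v`.  Its vertex set is `V ⊕ Unit`, where `v₁ = Sum.inl v` and `v₂ = Sum.inr ()`
are the two vertices of the edge `I`. -/
def wedgeAt [DecidableEq V] (K : Set (Finset V)) (v : V) : Set (Finset (V ⊕ Unit)) :=
  {τ | ∃ (s : Finset (V ⊕ Unit)) (σ : Finset V),
    s ⊆ {Sum.inl v, Sum.inr ()} ∧ τ = s ∪ σ.image Sum.inl ∧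
    (σ ∈ linkOf K v ∨ (s ≠ {Sum.inl v, Sum.inr ()} ∧ σ ∈ delOf K v))}

/-- The join `∂I ⋆ K` (the suspension of `K`), on the vertex set `V ⊕ Bool`, where the
two new suspension vertices are `Sum.inr true` and `Sum.inr false`. -/
def suspOf [DecidableEq V] (K : Set (Finset V)) : Set (Finset (V ⊕ Bool)) :=
  {τ | ∃ (s : Finset Bool) (σ : Finset V),
    s ≠ Finset.univ ∧ σ ∈ K ∧ τ = s.image Sum.inr ∪ σ.image Sum.inl}

/-- The geometric realization of a simplicial complex on a finite vertex set `V`,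
realized inside `V → ℝ` as convex combinations supported on faces. -/
def realization [Fintype V] (K : Set (Finset V)) : Set (V → ℝ) :=
  {f | (∀ w, 0 ≤ f w) ∧ (∑ w, f w) = 1 ∧ ∃ σ ∈ K, ∀ w, w ∉ σ → f w = 0}

open Finset

lemma sum_update_add_apply_self {ι : Type*} [Fintype ι] [DecidableEq ι] (x : ι → ℝ) (i : ι)
    (c : ℝ) : ∑ j, Function.update x i c j + x i = ∑ j, x j + c := by
  rw [sum_update_of_mem (mem_univ i), sdiff_singleton_eq_erase,
    ← add_sum_erase univ x (mem_univ i)]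
  ring

lemma min_add_max_sub_zero (p q : ℝ) : min p q + max (p - q) 0 = p := by
  rcases le_total p q with h | h <;> simp [h]

section Realization
variable [Fintype V] (K : Set (Finset V))

lemma isCompact_realization : IsCompact (realization K) := by
  have : realization K =
      ⋃ σ ∈ K, stdSimplex ℝ V ∩ ⋂ w ∈ (σ : Set V)ᶜ, {f | f w = 0} := by
    ext f
    simp only [realization, stdSimplex, Set.mem_ofPred_eq, Set.mem_compl_iff, SetLike.mem_coe,
      Set.mem_iUnion, Set.mem_inter_iff, Set.mem_iInter, exists_and_left, exists_prop]
    tauto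
  rw [this]
  exact (Set.toFinite K).isCompact_biUnion fun σ _ =>
    (isCompact_stdSimplex ℝ V).inter_right <|
      isClosed_biInter fun w _ => isClosed_eq (continuous_apply w) continuous_const

lemma single_mem_realization [DecidableEq V] {v : V} (hv : {v} ∈ K) :
    Pi.single v 1 ∈ realization K :=
  ⟨fun w => by simp [Pi.single_apply, apply_ite], by simp, {v}, hv, fun w hw => by simp_all⟩

variable {K}

lemma exists_mem_realization_eq_smul (hK : (realization K).Nonempty) {y : V → ℝ}
    (hy : ∀ w, 0 ≤ y w) {σ : Finset V} (hσ : σ ∈ K) (hσy : ∀ w ∉ σ, y w = 0) :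
    ∃ x ∈ realization K, y = (∑ w, y w) • x := by
  by_cases hs : ∑ w, y w = 0
  · obtain ⟨x₀, hx₀⟩ := hK
    refine ⟨x₀, hx₀, ?_⟩
    rw [hs, zero_smul]
    funext w
    exact (Finset.sum_eq_zero_iff_of_nonneg fun w _ => hy w).1 hs w (mem_univ w)
  · refine ⟨(∑ w, y w)⁻¹ • y, ⟨fun w => ?_, ?_, σ, hσ, fun w hw => ?_⟩, ?_⟩
    · exact smul_nonneg (inv_nonneg.2 (sum_nonneg fun w _ => hy w)) (hy w)
    · simp [← mul_sum, hs]
    · simp [hσy w hw]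
    · rw [smul_smul, mul_inv_cancel₀ hs, one_smul]

end Realization

section Characterizations
variable [Fintype V] [DecidableEq V] {K : Set (Finset V)} {v : V}

lemma mem_realization_suspOf {g : V ⊕ Bool → ℝ} :
    g ∈ realization (suspOf K) ↔ (∀ w, 0 ≤ g w) ∧ ∑ w, g w = 1 ∧
      (g (.inr true) = 0 ∨ g (.inr false) = 0) ∧
      ∃ σ ∈ K, ∀ w ∉ σ, g (.inl w) = 0 := by
  refine ⟨?_, ?_⟩
  · rintro ⟨hg, hsum, _, ⟨s, σ, hs, hσ, rfl⟩, hzero⟩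
    refine ⟨hg, hsum, ?_, σ, hσ, fun w hw => hzero _ (by simpa using hw)⟩
    by_contra! h
    exact hs (eq_univ_of_forall fun t => by
      by_contra ht
      cases t <;> simp_all)
  · rintro ⟨hg, hsum, hpole, σ, hσ, hzero⟩
    refine ⟨hg, hsum, _, ⟨univ.filter fun t => g (.inr t) ≠ 0, σ, ?_, hσ, rfl⟩, ?_⟩
    · rw [Ne, eq_univ_iff_forall]
      intro hall
      have := hall true
      have := hall false
      rcases hpole with h | h <;> simp_all
    · rintro (w | t) hw
      · exact hzero w (by simpa using hw)
      · simpa using hw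

lemma mem_realization_wedgeAt {f : V ⊕ Unit → ℝ} :
    f ∈ realization (wedgeAt K v) ↔ (∀ w, 0 ≤ f w) ∧ ∑ w, f w = 1 ∧
      ∃ σ ∈ K, (∀ w ∉ σ, w ≠ v → f (.inl w) = 0) ∧
        (v ∉ σ → f (.inl v) = 0 ∨ f (.inr ()) = 0) := by
  refine ⟨?_, ?_⟩
  · rintro ⟨hf, hsum, _, ⟨s, σ, hs, rfl, hσ⟩, hzero⟩
    refine ⟨hf, hsum, ?_⟩
    rcases hσ with ⟨hvσ, hσ⟩ | ⟨hsne, hσ, hvσ⟩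
    · refine ⟨insert v σ, hσ, fun w hw hwv => hzero _ ?_,
        fun h => absurd (mem_insert_self v σ) h⟩
      have := @hs (.inl w)
      simp_all
    · refine ⟨σ, hσ, fun w hw hwv => hzero _ ?_, fun _ => ?_⟩
      · have := @hs (.inl w)
        simp_all
      · by_contra! h
        refine hsne (Subset.antisymm hs (insert_subset_iff.2 ⟨?_, singleton_subset_iff.2 ?_⟩))
        · by_contra hv
          exact h.1 (hzero _ (by simp [hv, hvσ]))
        · by_contra hu
          exact h.2 (hzero _ (by simp [hu]))
  · rintro ⟨hf, hsum, ρ, hρ, hzero, hpole⟩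
    refine ⟨hf, hsum, ?_⟩
    by_cases hvρ : v ∈ ρ
    · refine ⟨_, ⟨{.inl v, .inr ()}, ρ.erase v, subset_rfl, rfl,
        .inl ⟨notMem_erase v ρ, ?_⟩⟩, ?_⟩
      · rwa [insert_erase hvρ]
      · rintro (w | u) hw
        · simp only [mem_union, mem_insert, mem_singleton, mem_image, mem_erase, Sum.inl.injEq,
            reduceCtorEq, or_false, exists_eq_right, not_or, not_and] at hw
          exact hzero w (hw.2 hw.1) hw.1
        · simp at hw
    · set s : Finset (V ⊕ Unit) := ({.inl v, .inr ()} : Finset _).filter (f · ≠ 0)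
      refine ⟨_, ⟨s, ρ, filter_subset _ _, rfl, .inr ⟨?_, hρ, hvρ⟩⟩, ?_⟩
      · simpa [s, filter_eq_self, or_iff_not_imp_left] using
          fun h => ⟨(), (hpole hvρ).resolve_left h⟩
      · rintro (w | u) hw
        · simp only [s, mem_union, mem_filter, mem_insert, mem_singleton, Sum.inl.injEq,
            reduceCtorEq, or_false, mem_image, exists_eq_right, not_or, not_and, not_not] at hw
          by_cases hwv : w = v
          exacts [hw.1 hwv, hzero w hw.2 hwv]
        · simpa [s] using hw

end Characterizations

section Wedge
variable [DecidableEq V] (v : V)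

noncomputable def wedgeToSusp (f : V ⊕ Unit → ℝ) : V ⊕ Bool → ℝ :=
  Sum.elim (Function.update (f ∘ .inl) v (2 * min (f (.inl v)) (f (.inr ()))))
    fun t => if t then max (f (.inl v) - f (.inr ())) 0 else max (f (.inr ()) - f (.inl v)) 0

noncomputable def suspToWedge (g : V ⊕ Bool → ℝ) : V ⊕ Unit → ℝ :=
  Sum.elim (Function.update (g ∘ .inl) v (g (.inl v) / 2 + g (.inr true)))
    fun _ => g (.inl v) / 2 + g (.inr false)

section Evaluation
variable (f : V ⊕ Unit → ℝ) (g : V ⊕ Bool → ℝ) {w : V}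

@[simp] lemma wedgeToSusp_inl_self :
    wedgeToSusp v f (.inl v) = 2 * min (f (.inl v)) (f (.inr ())) := by
  simp only [wedgeToSusp, Sum.elim_inl, Function.update_self]

@[simp] lemma wedgeToSusp_inl_of_ne (hw : w ≠ v) : wedgeToSusp v f (.inl w) = f (.inl w) := by
  simp only [wedgeToSusp, Sum.elim_inl, Function.update_of_ne hw, Function.comp_apply]

@[simp] lemma wedgeToSusp_inr_true :
    wedgeToSusp v f (.inr true) = max (f (.inl v) - f (.inr ())) 0 := rfl

@[simp] lemma wedgeToSusp_inr_false :
    wedgeToSusp v f (.inr false) = max (f (.inr ()) - f (.inl v)) 0 := rfl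

@[simp] lemma suspToWedge_inl_self :
    suspToWedge v g (.inl v) = g (.inl v) / 2 + g (.inr true) := by
  simp only [suspToWedge, Sum.elim_inl, Function.update_self]

@[simp] lemma suspToWedge_inl_of_ne (hw : w ≠ v) : suspToWedge v g (.inl w) = g (.inl w) := by
  simp only [suspToWedge, Sum.elim_inl, Function.update_of_ne hw, Function.comp_apply]

@[simp] lemma suspToWedge_inr (u : Unit) :
    suspToWedge v g (.inr u) = g (.inl v) / 2 + g (.inr false) := rfl

end Evaluation

lemma continuous_wedgeToSusp : Continuous (wedgeToSusp v) := by
  refine continuous_pi fun w => ?_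
  rcases w with w | t
  · by_cases hw : w = v
    · subst hw
      simp only [wedgeToSusp_inl_self]
      fun_prop
    · simp only [wedgeToSusp_inl_of_ne v _ hw]
      fun_prop
  · cases t <;> simp only [wedgeToSusp_inr_true, wedgeToSusp_inr_false] <;> fun_prop

lemma continuous_suspToWedge : Continuous (suspToWedge v) := by
  refine continuous_pi fun w => ?_
  rcases w with w | u
  · by_cases hw : w = v
    · subst hw
      simp only [suspToWedge_inl_self]
      fun_prop
    · simp only [suspToWedge_inl_of_ne v _ hw]
      fun_prop
  · simp only [suspToWedge_inr]
    fun_prop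

lemma suspToWedge_wedgeToSusp (f : V ⊕ Unit → ℝ) : suspToWedge v (wedgeToSusp v f) = f := by
  funext w
  rcases w with w | u
  · by_cases hw : w = v
    · subst hw
      simp [min_add_max_sub_zero]
    · simp [hw]
  · simp only [suspToWedge_inr, wedgeToSusp_inl_self, wedgeToSusp_inr_false]
    rw [mul_div_cancel_left₀ _ two_ne_zero, min_comm]
    exact min_add_max_sub_zero _ _

lemma wedgeToSusp_suspToWedge {g : V ⊕ Bool → ℝ} (ha : 0 ≤ g (.inr true))
    (hb : 0 ≤ g (.inr false)) (hab : g (.inr true) = 0 ∨ g (.inr false) = 0) :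
    wedgeToSusp v (suspToWedge v g) = g := by
  funext w
  rcases w with w | t
  · by_cases hw : w = v
    · subst hw
      rcases hab with h | h <;> simp [h, ha, hb, mul_div_cancel₀]
    · simp [hw]
  · cases t <;> rcases hab with h | h <;> simp [h, ha, hb]

end Wedge

section WedgeRealization
variable [Fintype V] [DecidableEq V] {K : Set (Finset V)} (v : V)

lemma sum_wedgeToSusp (f : V ⊕ Unit → ℝ) : ∑ w, wedgeToSusp v f w = ∑ w, f w := by
  have hV := sum_update_add_apply_self (f ∘ .inl) v (2 * min (f (.inl v)) (f (.inr ())))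
  have hp := min_add_max_sub_zero (f (.inl v)) (f (.inr ()))
  have hq := min_add_max_sub_zero (f (.inr ())) (f (.inl v))
  rw [min_comm] at hq
  simp only [Fintype.sum_sum_type, Fintype.sum_bool, Fintype.sum_unique, wedgeToSusp_inr_true,
    wedgeToSusp_inr_false, Function.comp_apply] at hV ⊢
  change ∑ w, Function.update (f ∘ .inl) v _ w + _ = _
  linarith

lemma sum_suspToWedge (g : V ⊕ Bool → ℝ) : ∑ w, suspToWedge v g w = ∑ w, g w := by
  have hV := sum_update_add_apply_self (g ∘ .inl) v (g (.inl v) / 2 + g (.inr true))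
  simp only [Fintype.sum_sum_type, Fintype.sum_bool, Fintype.sum_unique, suspToWedge_inr,
    Function.comp_apply] at hV ⊢
  change ∑ w, Function.update (g ∘ .inl) v _ w + _ = _
  linarith

variable {v}

lemma wedgeToSusp_mem {f : V ⊕ Unit → ℝ} (hf : f ∈ realization (wedgeAt K v)) :
    wedgeToSusp v f ∈ realization (suspOf K) := by
  obtain ⟨hf, hsum, σ, hσ, hzero, hpole⟩ := mem_realization_wedgeAt.1 hf
  have hp := hf (.inl v)
  have hq := hf (.inr ())
  refine mem_realization_suspOf.2 ⟨?_, by rwa [sum_wedgeToSusp], ?_, σ, hσ, fun w hw => ?_⟩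
  · rintro (w | t)
    · by_cases hw : w = v
      · subst hw
        simp [hp, hq]
      · simp [hw, hf]
    · cases t <;> simp
  · rcases le_total (f (.inl v)) (f (.inr ())) with h | h
    · exact .inl (by simp [h])
    · exact .inr (by simp [h])
  · by_cases hwv : w = v
    · subst hwv
      rcases hpole hw with h | h <;> simp [h, hp, hq]
    · simp [hwv, hzero w hw hwv]

lemma suspToWedge_mem {g : V ⊕ Bool → ℝ} (hg : g ∈ realization (suspOf K)) :
    suspToWedge v g ∈ realization (wedgeAt K v) := by
  obtain ⟨hg, hsum, hpole, σ, hσ, hzero⟩ := mem_realization_suspOf.1 hg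
  refine mem_realization_wedgeAt.2 ⟨?_, by rwa [sum_suspToWedge], σ, hσ,
    fun w hw hwv => by simp [hwv, hzero w hw], fun hv => ?_⟩
  · rintro (w | u)
    · by_cases hw : w = v
      · subst hw
        have := hg (.inl w)
        have := hg (.inr true)
        simp only [suspToWedge_inl_self]
        positivity
      · simp [hw, hg]
    · have := hg (.inl v)
      have := hg (.inr false)
      simp only [suspToWedge_inr]
      positivity
  · rcases hpole with h | h <;> simp [h, hzero v hv]

variable (K v)

noncomputable def wedgeHomeomorphSusp :
    realization (wedgeAt K v) ≃ₜ realization (suspOf K) where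
  toFun f := ⟨wedgeToSusp v f, wedgeToSusp_mem f.2⟩
  invFun g := ⟨suspToWedge v g, suspToWedge_mem g.2⟩
  left_inv f := Subtype.ext (suspToWedge_wedgeToSusp v f)
  right_inv g := by
    obtain ⟨hg, -, hpole, -⟩ := mem_realization_suspOf.1 g.2
    exact Subtype.ext (wedgeToSusp_suspToWedge v (hg _) (hg _) hpole)
  continuous_toFun := ((continuous_wedgeToSusp v).comp continuous_subtype_val).subtype_mk _
  continuous_invFun := ((continuous_suspToWedge v).comp continuous_subtype_val).subtype_mk _

end WedgeRealization

section SuspensionCoordinates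

noncomputable def suspPoint (z : ℝ) (x : V → ℝ) : V ⊕ Bool → ℝ :=
  Sum.elim ((1 - |z|) • x) fun t => if t then max z 0 else max (-z) 0

lemma continuous_suspPoint : Continuous fun a : ℝ × (V → ℝ) => suspPoint a.1 a.2 := by
  refine continuous_pi fun w => ?_
  rcases w with w | t
  · simp only [suspPoint, Sum.elim_inl, Pi.smul_apply, smul_eq_mul]
    fun_prop
  · cases t <;> simp only [suspPoint, Sum.elim_inr, Bool.false_eq_true, ↓reduceIte] <;> fun_prop

lemma suspPoint_eq_suspPoint_iff {z z' : ℝ} {x x' : V → ℝ} :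
    suspPoint z x = suspPoint z' x' ↔ z = z' ∧ (|z| = 1 ∨ x = x') := by
  refine ⟨fun h => ?_, ?_⟩
  · have hz : z = z' := by
      have ht := congrFun h (.inr true)
      have hf := congrFun h (.inr false)
      simp only [suspPoint, Sum.elim_inr, ↓reduceIte, Bool.false_eq_true] at ht hf
      rw [← max_zero_sub_max_neg_zero_eq_self z, ← max_zero_sub_max_neg_zero_eq_self z', ht,
        hf]
    subst hz
    have hx : (1 - |z|) • x = (1 - |z|) • x' := funext fun w => congrFun h (.inl w)
    rw [← sub_eq_zero, ← smul_sub, smul_eq_zero, sub_eq_zero, sub_eq_zero, eq_comm] at hx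
    exact ⟨rfl, hx⟩
  · rintro ⟨rfl, h | rfl⟩
    · simp [suspPoint, h]
    · rfl

variable [Fintype V] [DecidableEq V] {K : Set (Finset V)}

lemma suspPoint_mem {z : ℝ} (hz : |z| ≤ 1) {x : V → ℝ} (hx : x ∈ realization K) :
    suspPoint z x ∈ realization (suspOf K) := by
  obtain ⟨hx, hsum, σ, hσ, hzero⟩ := hx
  refine mem_realization_suspOf.2
    ⟨?_, ?_, ?_, σ, hσ, fun w hw => by simp [suspPoint, hzero w hw]⟩
  · rintro (w | t)
    · exact mul_nonneg (sub_nonneg.2 hz) (hx w)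
    · cases t <;> simp [suspPoint]
  · simp [suspPoint, Fintype.sum_sum_type, ← mul_sum, hsum,
      max_zero_add_max_neg_zero_eq_abs_self]
  · rcases le_total z 0 with h | h
    · exact .inl (by simp [suspPoint, h])
    · exact .inr (by simp [suspPoint, h])

lemma exists_suspPoint_eq (hK : (realization K).Nonempty) {g : V ⊕ Bool → ℝ}
    (hg : g ∈ realization (suspOf K)) :
    ∃ z, |z| ≤ 1 ∧ ∃ x ∈ realization K, suspPoint z x = g := by
  obtain ⟨hg, hsum, hpole, σ, hσ, hzero⟩ := mem_realization_suspOf.1 hg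
  obtain ⟨x, hx, hgx⟩ := exists_mem_realization_eq_smul hK (fun w => hg (.inl w)) hσ hzero
  have hV : 0 ≤ ∑ w, g (.inl w) := sum_nonneg fun w _ => hg _
  simp only [Fintype.sum_sum_type, Fintype.sum_bool] at hsum
  have ha := hg (.inr true)
  have hb := hg (.inr false)
  have habs : |g (.inr true) - g (.inr false)| = g (.inr true) + g (.inr false) := by
    rcases hpole with h | h
    · rw [h, zero_sub, abs_neg, abs_of_nonneg hb, zero_add]
    · rw [h, sub_zero, abs_of_nonneg ha, add_zero]
  refine ⟨g (.inr true) - g (.inr false), by linarith, x, hx, funext fun w => ?_⟩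
  rcases w with w | t
  · have hmass : 1 - |g (.inr true) - g (.inr false)| = ∑ w, g (.inl w) := by linarith
    simp only [suspPoint, Sum.elim_inl, Pi.smul_apply, smul_eq_mul, hmass]
    exact (congrFun hgx w).symm
  · rcases hpole with h | h <;> cases t <;> simp [suspPoint, h, ha, hb]

end SuspensionCoordinates

section SphereCoordinates
variable {n : ℕ}

noncomputable def spherePoint (z : ℝ) (y : EuclideanSpace ℝ (Fin n)) :
    EuclideanSpace ℝ (Fin (n + 1)) :=
  WithLp.toLp 2 (Fin.snoc (√(1 - z ^ 2) • y).ofLp z)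

lemma norm_sq_toLp_snoc (y : EuclideanSpace ℝ (Fin n)) (z : ℝ) :
    ‖(WithLp.toLp 2 (Fin.snoc y.ofLp z) : EuclideanSpace ℝ (Fin (n + 1)))‖ ^ 2 =
      ‖y‖ ^ 2 + z ^ 2 := by
  simp [EuclideanSpace.real_norm_sq_eq, Fin.sum_univ_castSucc]

lemma sqrt_one_sub_sq_eq_zero_iff {z : ℝ} (hz : |z| ≤ 1) : √(1 - z ^ 2) = 0 ↔ |z| = 1 := by
  rw [Real.sqrt_eq_zero', sub_nonpos, one_le_sq_iff_one_le_abs]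
  exact ⟨hz.antisymm, ge_of_eq⟩

lemma continuous_spherePoint :
    Continuous fun a : ℝ × EuclideanSpace ℝ (Fin n) => spherePoint a.1 a.2 := by
  unfold spherePoint
  fun_prop

lemma spherePoint_mem_sphere {z : ℝ} (hz : |z| ≤ 1) {y : EuclideanSpace ℝ (Fin n)}
    (hy : y ∈ Metric.sphere 0 1) : spherePoint z y ∈ Metric.sphere 0 1 := by
  rw [mem_sphere_zero_iff_norm] at hy ⊢
  rw [← pow_eq_one_iff_of_nonneg (norm_nonneg _) two_ne_zero, spherePoint, norm_sq_toLp_snoc,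
    norm_smul, mul_pow, hy, Real.norm_eq_abs, sq_abs,
    Real.sq_sqrt (by nlinarith [abs_nonneg z, sq_abs z])]
  ring

lemma exists_spherePoint_eq {y₀ : EuclideanSpace ℝ (Fin n)} (hy₀ : y₀ ∈ Metric.sphere 0 1)
    {u : EuclideanSpace ℝ (Fin (n + 1))} (hu : u ∈ Metric.sphere 0 1) :
    ∃ z, |z| ≤ 1 ∧ ∃ y ∈ Metric.sphere 0 1, spherePoint z y = u := by
  set w : EuclideanSpace ℝ (Fin n) := WithLp.toLp 2 (Fin.init u.ofLp)
  set z := u (Fin.last n)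
  have hu' : u = WithLp.toLp 2 (Fin.snoc w.ofLp z) := by
    simp [w, z, Fin.snoc_init_self]
  have hnorm : ‖w‖ ^ 2 + z ^ 2 = 1 := by
    rw [← norm_sq_toLp_snoc, ← hu', mem_sphere_zero_iff_norm.1 hu, one_pow]
  obtain ⟨y, hy, hwy⟩ :
      ∃ y ∈ Metric.sphere (0 : EuclideanSpace ℝ (Fin n)) 1, ‖w‖ • y = w := by
    by_cases hw : w = 0
    · exact ⟨y₀, hy₀, by simp [hw]⟩
    · exact ⟨‖w‖⁻¹ • w, by simp [norm_smul, hw], by simp [smul_smul, hw]⟩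
  have hc : √(1 - z ^ 2) = ‖w‖ := by
    rw [← hnorm, add_sub_cancel_right, Real.sqrt_sq (norm_nonneg w)]
  refine ⟨z, ?_, y, hy, ?_⟩
  · rw [← sq_le_one_iff_abs_le_one]
    nlinarith [sq_nonneg ‖w‖]
  · rw [spherePoint, hc, hwy, hu']

lemma spherePoint_eq_spherePoint_iff {z z' : ℝ} (hz : |z| ≤ 1)
    {y y' : EuclideanSpace ℝ (Fin n)} :
    spherePoint z y = spherePoint z' y' ↔ z = z' ∧ (|z| = 1 ∨ y = y') := by
  rw [spherePoint, spherePoint, (WithLp.toLp_injective 2).eq_iff, Fin.snoc_inj,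
    (WithLp.ofLp_injective 2).eq_iff, and_comm]
  refine and_congr_right fun hzz => ?_
  subst hzz
  rw [← sub_eq_zero, ← smul_sub, smul_eq_zero, sub_eq_zero, sqrt_one_sub_sq_eq_zero_iff hz]

end SphereCoordinates

theorem nonempty_homeomorph_of_ker_eq {A B C : Type*} [TopologicalSpace A] [TopologicalSpace B]
    [TopologicalSpace C] [CompactSpace A] [T2Space B] [T2Space C] {p : C(A, B)} {q : C(A, C)}
    (hp : Function.Surjective p) (hq : Function.Surjective q)
    (hpq : ∀ a a', p a = p a' ↔ q a = q a') : Nonempty (B ≃ₜ C) := by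
  have hker : Setoid.ker p = Setoid.ker q := Setoid.ext hpq
  have ep := (Topology.IsQuotientMap.of_surjective_continuous hp p.continuous).homeomorph
  rw [hker] at ep
  exact ⟨ep.symm.trans
    (Topology.IsQuotientMap.of_surjective_continuous hq q.continuous).homeomorph⟩

theorem nonempty_realization_suspOf_homeomorph_sphere [Fintype V] [DecidableEq V]
    {K : Set (Finset V)} {n : ℕ} (hK : (realization K).Nonempty)
    (h : realization K ≃ₜ Metric.sphere (0 : EuclideanSpace ℝ (Fin n)) 1) :
    Nonempty (realization (suspOf K) ≃ₜ
      Metric.sphere (0 : EuclideanSpace ℝ (Fin (n + 1))) 1) := by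
  have : CompactSpace (realization K) := isCompact_iff_compactSpace.1 (isCompact_realization K)
  let p : C(Set.Icc (-1 : ℝ) 1 × realization K, realization (suspOf K)) :=
    ⟨fun a => ⟨suspPoint a.1 a.2, suspPoint_mem (abs_le.2 a.1.2) a.2.2⟩,
      (continuous_suspPoint.comp ((continuous_subtype_val.comp continuous_fst).prodMk
        (continuous_subtype_val.comp continuous_snd))).subtype_mk _⟩
  let q : C(Set.Icc (-1 : ℝ) 1 × realization K,
      Metric.sphere (0 : EuclideanSpace ℝ (Fin (n + 1))) 1) :=
    ⟨fun a => ⟨spherePoint a.1 (h a.2), spherePoint_mem_sphere (abs_le.2 a.1.2) (h a.2).2⟩,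
      (continuous_spherePoint.comp ((continuous_subtype_val.comp continuous_fst).prodMk
        (continuous_subtype_val.comp (h.continuous.comp continuous_snd)))).subtype_mk _⟩
  obtain ⟨x₀, hx₀⟩ := hK
  refine nonempty_homeomorph_of_ker_eq (p := p) (q := q) (fun g => ?_) (fun u => ?_) ?_
  · obtain ⟨z, hz, x, hx, hxg⟩ := exists_suspPoint_eq ⟨x₀, hx₀⟩ g.2
    exact ⟨(⟨z, abs_le.1 hz⟩, ⟨x, hx⟩), Subtype.ext hxg⟩
  · obtain ⟨z, hz, y, hy, hyu⟩ := exists_spherePoint_eq (h ⟨x₀, hx₀⟩).2 u.2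
    exact ⟨(⟨z, abs_le.1 hz⟩, h.symm ⟨y, hy⟩), Subtype.ext (by simpa [q] using hyu)⟩
  · rintro ⟨⟨z, hz⟩, x⟩ ⟨⟨z', -⟩, x'⟩
    simp only [p, q, ContinuousMap.coe_mk, Subtype.mk.injEq, suspPoint_eq_suspPoint_iff,
      spherePoint_eq_spherePoint_iff (abs_le.2 hz), Subtype.val_inj, h.injective.eq_iff]

theorem wedge_realization_homeo_suspension_general [Fintype V] [DecidableEq V]
    (K : Set (Finset V)) (v : V) (hv : ({v} : Finset V) ∈ K) :
    Nonempty (realization (wedgeAt K v) ≃ₜ realization (suspOf K)) ∧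
    ∀ n : ℕ,
      Nonempty (realization K ≃ₜ (Metric.sphere (0 : EuclideanSpace ℝ (Fin n)) 1)) →
      Nonempty (realization (wedgeAt K v) ≃ₜ
        (Metric.sphere (0 : EuclideanSpace ℝ (Fin (n + 1))) 1)) := by
  refine ⟨⟨wedgeHomeomorphSusp K v⟩, fun n ⟨h⟩ => ?_⟩
  obtain ⟨e⟩ :=
    nonempty_realization_suspOf_homeomorph_sphere ⟨_, single_mem_realization K hv⟩ h
  exact ⟨(wedgeHomeomorphSusp K v).trans e⟩

/-- The geometric realization of `wed_v(K)` is homeomorphic to that of the suspension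
`∂I ⋆ K`; in particular, if `K` is a simplicial `(n-1)`-sphere then `wed_v(K)` is a
simplicial `n`-sphere. -/
theorem wedge_realization_homeo_suspension [Fintype V] [DecidableEq V]
    (K : Set (Finset V)) (hK : IsComplex K) (v : V) (hv : ({v} : Finset V) ∈ K) :
    Nonempty (realization (wedgeAt K v) ≃ₜ realization (suspOf K)) ∧
    ∀ n : ℕ,
      Nonempty (realization K ≃ₜ (Metric.sphere (0 : EuclideanSpace ℝ (Fin n)) 1)) →
      Nonempty (realization (wedgeAt K v) ≃ₜ
        (Metric.sphere (0 : EuclideanSpace ℝ (Fin (n + 1))) 1)) :=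
  wedge_realization_homeo_suspension_general K v hv
end

section
/- Let P be a simple polytope with facet F, and let K be the boundary simplicial complex of the dual simplicial polytope P*. Then the boundary complex of the polytopal wedge wed_F(P) equals the simplicial wedge of K at the vertex corresponding to F. -/
/-! A face of the polytopal wedge is encoded by the set `A ⊆ ι \ {i₀}` of old facets it lies on
together with which of the two new facets, the slanted one `f i₀ x + c t = b i₀` and the bottom
`t = 0`, it uses. These two meet exactly over `F i₀ × {0}`, so using both forces the face to lie
over `F i₀`: this is `I ⋆ link_K {i₀}`. Using at most one of them, the face is realised over any
point `x` of `⋂ i ∈ A, F i` at height `t = 0` or `t = (b i₀ - f i₀ x) / c`: this is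
`∂I ⋆ (K \ {i₀})`. -/

variable {V : Type*}

section SimplicialWedge

variable [DecidableEq V]

lemma Finset.toLeft_union_image_inl_erase {s : Finset (V ⊕ Unit)} {σ : Finset V} {v : V}
    (hs : s ⊆ {Sum.inl v, Sum.inr ()}) (hv : v ∉ σ) :
    (s ∪ σ.image Sum.inl).toLeft.erase v = σ := by
  ext i
  have := @hs (Sum.inl i)
  by_cases hi : i = v <;> simp_all

lemma Finset.eq_inter_union_image_inl_toLeft_erase (τ : Finset (V ⊕ Unit)) (v : V) :
    τ = τ ∩ {Sum.inl v, Sum.inr ()} ∪ (τ.toLeft.erase v).image Sum.inl := by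
  ext (i | u)
  · by_cases hi : i = v <;> simp [hi]
  · simp

open Finset in
theorem mem_wedgeAt_iff {K : Set (Finset V)} {v : V} {τ : Finset (V ⊕ Unit)} :
    τ ∈ wedgeAt K v ↔ insert v (τ.toLeft.erase v) ∈ K ∨
      (¬(Sum.inl v ∈ τ ∧ Sum.inr () ∈ τ) ∧ τ.toLeft.erase v ∈ K) := by
  constructor
  · rintro ⟨s, σ, hs, rfl, hσ⟩
    rcases hσ with ⟨hv, hσK⟩ | ⟨hs_ne, hσK, hv⟩
    all_goals rw [toLeft_union_image_inl_erase hs hv]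
    · exact Or.inl hσK
    · refine Or.inr ⟨fun ⟨hl, hr⟩ => hs_ne (hs.antisymm ?_), hσK⟩
      simp_all [insert_subset_iff]
  · rintro (hK | ⟨hτ, hK⟩) <;>
      refine ⟨τ ∩ {Sum.inl v, Sum.inr ()}, τ.toLeft.erase v, inter_subset_right,
        eq_inter_union_image_inl_toLeft_erase τ v, ?_⟩
    · exact Or.inl ⟨notMem_erase v _, hK⟩
    · refine Or.inr ⟨fun h => hτ ?_, hK, notMem_erase v _⟩
      simpa [insert_subset_iff] using inter_eq_right.1 h

end SimplicialWedge

lemma Set.inter_biInter_sep_nonempty_iff {α ι : Type*} (s : Set α) (p : ι → α → Prop)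
    (A : Finset ι) : (s ∩ ⋂ i ∈ A, {x ∈ s | p i x}).Nonempty ↔ ∃ x ∈ s, ∀ i ∈ A, p i x := by
  simp only [Set.Nonempty, Set.mem_inter_iff, Set.mem_iInter₂, Set.mem_ofPred_eq]
  exact exists_congr fun x => and_congr_right fun hx => forall₂_congr fun _ _ => and_iff_right hx

section PolytopalWedge

variable {E ι : Type*} [DecidableEq ι] (P : Set E) (f : ι → E → ℝ) (b : ι → ℝ) (v : ι) (c : ℝ)

def polytopalWedge : Set (E × ℝ) :=
  {p | p.1 ∈ P ∧ 0 ≤ p.2 ∧ f v p.1 + c * p.2 ≤ b v}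

def wedgeFacet : ι ⊕ Unit → Set (E × ℝ) :=
  Sum.elim
    (fun i => if i = v then {p ∈ polytopalWedge P f b v c | f v p.1 + c * p.2 = b v}
      else {p ∈ polytopalWedge P f b v c | f i p.1 = b i})
    (fun _ => {p ∈ polytopalWedge P f b v c | p.2 = 0})

variable {P f b v c}

lemma mem_inter_wedgeFacet_iff {τ : Finset (ι ⊕ Unit)} {x : E} {t : ℝ} :
    (x, t) ∈ polytopalWedge P f b v c ∩ ⋂ w ∈ τ, wedgeFacet P f b v c w ↔
      (x, t) ∈ polytopalWedge P f b v c ∧ (Sum.inl v ∈ τ → f v x + c * t = b v) ∧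
        (Sum.inr () ∈ τ → t = 0) ∧ ∀ i ∈ τ.toLeft.erase v, f i x = b i := by
  simp only [Set.mem_inter_iff, Set.mem_iInter₂, Finset.mem_erase, Finset.mem_toLeft]
  refine and_congr_right fun hQ =>
    ⟨fun h => ⟨fun hl => ?_, fun hr => ?_, fun i ⟨hi, hiτ⟩ => ?_⟩, ?_⟩
  · simpa [wedgeFacet, hQ] using h _ hl
  · simpa [wedgeFacet, hQ] using h _ hr
  · simpa [wedgeFacet, hi, hQ] using h _ hiτ
  · rintro ⟨hl, hr, hA⟩ (i | u) hw
    · by_cases hi : i = v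
      · subst hi; simpa [wedgeFacet] using ⟨hQ, hl hw⟩
      · simpa [wedgeFacet, hi] using ⟨hQ, hA i ⟨hi, hw⟩⟩
    · exact ⟨hQ, hr hw⟩

theorem nonempty_inter_wedgeFacet_iff (hP : ∀ x ∈ P, f v x ≤ b v) (hc : 0 < c)
    (τ : Finset (ι ⊕ Unit)) :
    (polytopalWedge P f b v c ∩ ⋂ w ∈ τ, wedgeFacet P f b v c w).Nonempty ↔
      (∃ x ∈ P, ∀ i ∈ insert v (τ.toLeft.erase v), f i x = b i) ∨
        (¬(Sum.inl v ∈ τ ∧ Sum.inr () ∈ τ) ∧ ∃ x ∈ P, ∀ i ∈ τ.toLeft.erase v, f i x = b i) := by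
  simp only [Finset.forall_mem_insert]
  constructor
  · rintro ⟨⟨x, t⟩, hxt⟩
    obtain ⟨⟨hx, -, -⟩, hl, hr, hA⟩ := mem_inter_wedgeFacet_iff.1 hxt
    by_cases hτ : Sum.inl v ∈ τ ∧ Sum.inr () ∈ τ
    · obtain rfl := hr hτ.2
      exact Or.inl ⟨x, hx, by simpa using hl hτ.1, hA⟩
    · exact Or.inr ⟨hτ, x, hx, hA⟩
  · rintro (⟨x, hx, hv, hA⟩ | ⟨hτ, x, hx, hA⟩)
    · exact ⟨(x, 0), mem_inter_wedgeFacet_iff.2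
        ⟨⟨hx, le_rfl, by simp [hv]⟩, fun _ => by simp [hv], fun _ => rfl, hA⟩⟩
    by_cases hr : Sum.inr () ∈ τ
    · exact ⟨(x, 0), mem_inter_wedgeFacet_iff.2
        ⟨⟨hx, le_rfl, by simpa using hP x hx⟩, fun hl => absurd ⟨hl, hr⟩ hτ, fun _ => rfl, hA⟩⟩
    have hlift : f v x + c * ((b v - f v x) / c) = b v := by field_simp; ring
    exact ⟨(x, (b v - f v x) / c), mem_inter_wedgeFacet_iff.2
      ⟨⟨hx, div_nonneg (sub_nonneg.2 (hP x hx)) hc.le, hlift.le⟩, fun _ => hlift,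
        fun h => absurd h hr, hA⟩⟩

end PolytopalWedge

theorem boundaryComplex_polytopalWedge_eq_simplicialWedge_general
    {n : ℕ} {ι : Type*} [DecidableEq ι]
    (f : ι → (EuclideanSpace ℝ (Fin n) →ₗ[ℝ] ℝ)) (b : ι → ℝ)
    (P : Set (EuclideanSpace ℝ (Fin n)))
    (hP : P = {x | ∀ i, f i x ≤ b i})
    (F : ι → Set (EuclideanSpace ℝ (Fin n)))
    (hF : ∀ i, F i = {x ∈ P | f i x = b i})
    (K : Set (Finset ι))
    (hK : K = {σ : Finset ι | (P ∩ ⋂ i ∈ σ, F i).Nonempty})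
    (i₀ : ι) (c : ℝ) (hc : 0 < c)
    (Q : Set (EuclideanSpace ℝ (Fin n) × ℝ))
    (hQ : Q = {p | p.1 ∈ P ∧ 0 ≤ p.2 ∧ f i₀ p.1 + c * p.2 ≤ b i₀})
    (G : ι ⊕ Unit → Set (EuclideanSpace ℝ (Fin n) × ℝ))
    (hG : G = Sum.elim
      (fun i => if i = i₀ then {p ∈ Q | f i₀ p.1 + c * p.2 = b i₀}
                else {p ∈ Q | f i p.1 = b i})
      (fun _ => {p ∈ Q | p.2 = 0})) :
    ∀ σ : Finset (ι ⊕ Unit), σ ∈ wedgeAt K i₀ ↔ (Q ∩ ⋂ w ∈ σ, G w).Nonempty := by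
  obtain rfl : F = fun i => {x ∈ P | f i x = b i} := funext hF
  subst hK
  obtain rfl : Q = polytopalWedge P (fun i => f i) b i₀ c := hQ
  obtain rfl : G = wedgeFacet P (fun i => f i) b i₀ c := hG
  have hP_le : ∀ x ∈ P, f i₀ x ≤ b i₀ := fun x hx => by rw [hP] at hx; exact hx i₀
  intro σ
  rw [mem_wedgeAt_iff, nonempty_inter_wedgeFacet_iff hP_le hc σ]
  simp only [Set.mem_ofPred_eq, Set.inter_biInter_sep_nonempty_iff]

/-- Let `P = {x | ∀ i, f i x ≤ b i}` be a simple `n`-polytope with facets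
`F i = P ∩ {f i = b i}`, and let `K` be the boundary complex of the dual simplicial
polytope `P*`, i.e. the complex on the facet-index set whose faces are the sets of
facets with nonempty common intersection.  Let `Q ⊆ ℝⁿ × ℝ` be the polytopal wedge of
`P` at the facet `F i₀`, obtained by cutting `P × [0,∞)` with the hyperplane
`f i₀ x + c t = b i₀` (with `c > 0`, so `H ∩ (P × {0}) = F i₀ × {0}` and `H` meets
the interior of `P × [0,∞)`).  Its facets are indexed by `ι ⊕ Unit`: for `i ≠ i₀` the
facet over `F i`, for `i₀` the slanted facet cut by `H`, and the extra index the bottom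
facet `P × {0}`.  Then the boundary complex of `wed_{F i₀}(P)` is exactly the simplicial
wedge of `K` at the vertex `i₀`. -/
theorem boundaryComplex_polytopalWedge_eq_simplicialWedge
    {n : ℕ} {ι : Type*} [Fintype ι] [DecidableEq ι]
    (f : ι → (EuclideanSpace ℝ (Fin n) →ₗ[ℝ] ℝ)) (b : ι → ℝ)
    (P : Set (EuclideanSpace ℝ (Fin n)))
    (hP : P = {x | ∀ i, f i x ≤ b i})
    (hPcompact : IsCompact P) (hPint : (interior P).Nonempty)
    (F : ι → Set (EuclideanSpace ℝ (Fin n)))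
    (hF : ∀ i, F i = {x ∈ P | f i x = b i})
    (hFne : ∀ i, (F i).Nonempty)
    (hsimple : ∀ x ∈ P, {i | f i x = b i}.ncard ≤ n)
    (K : Set (Finset ι))
    (hK : K = {σ : Finset ι | (P ∩ ⋂ i ∈ σ, F i).Nonempty})
    (i₀ : ι) (c : ℝ) (hc : 0 < c)
    (Q : Set (EuclideanSpace ℝ (Fin n) × ℝ))
    (hQ : Q = {p | p.1 ∈ P ∧ 0 ≤ p.2 ∧ f i₀ p.1 + c * p.2 ≤ b i₀})
    (G : ι ⊕ Unit → Set (EuclideanSpace ℝ (Fin n) × ℝ))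
    (hG : G = Sum.elim
      (fun i => if i = i₀ then {p ∈ Q | f i₀ p.1 + c * p.2 = b i₀}
                else {p ∈ Q | f i p.1 = b i})
      (fun _ => {p ∈ Q | p.2 = 0})) :
    ∀ σ : Finset (ι ⊕ Unit), σ ∈ wedgeAt K i₀ ↔ (Q ∩ ⋂ w ∈ σ, G w).Nonempty :=
  boundaryComplex_polytopalWedge_eq_simplicialWedge_general f b P hP F hF K hK i₀ c hc Q hQ G hG
end

section
/- Let K and L be simplicial complexes on disjoint vertex sets {v₁,…,v_m} and {w₁,…,w_ℓ}, and let J = (a₁,…,a_m) and J′ = (b₁,…,b_ℓ) be vectors of positive integers. Then K(J) ⋆ L(J′) = (K ⋆ L)(J ∪ J′), where J ∪ J′ = (a₁,…,a_m,b₁,…,b_ℓ). -/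
variable {V W : Type*}

/-- `S` is a minimal non-face of `K`: it is not a face, but every proper subset is. -/
def MinNonFace (K : Set (Finset V)) (S : Finset V) : Prop :=
  S ∉ K ∧ ∀ T ⊂ S, T ∈ K

/-- The full fiber of `S ⊆ V` in the vertex set `Σ i, Fin (J i)` of `K(J)`: all copies
`i_1, …, i_{J i}` of every vertex `i ∈ S`. -/
def fullCopy (J : V → ℕ) (S : Finset V) : Finset (Σ i : V, Fin (J i)) :=
  S.sigma fun _ => Finset.univ

/-- The simplicial complex `K(J)` on the vertex set `Σ i, Fin (J i)`: its minimal
non-faces are exactly the full fibers of the minimal non-faces of `K`; equivalently, a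
subset is a face iff it contains no full fiber of a minimal non-face of `K`. -/
def wedgeJ (K : Set (Finset V)) (J : V → ℕ) : Set (Finset (Σ i : V, Fin (J i))) :=
  {τ | ∀ S : Finset V, MinNonFace K S → ¬ fullCopy J S ⊆ τ}

/-- The join `K ⋆ L` of complexes on disjoint vertex sets, realized on `V ⊕ W`. -/
def joinOf [DecidableEq V] [DecidableEq W] (K : Set (Finset V)) (L : Set (Finset W)) :
    Set (Finset (V ⊕ W)) :=
  {τ | ∃ σ₁ ∈ K, ∃ σ₂ ∈ L, τ = σ₁.image Sum.inl ∪ σ₂.image Sum.inr}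

/-- The canonical identification of the vertex set of `K(J) ⋆ L(J')` with that of
`(K ⋆ L)(J ∪ J')`. -/
def sumSigmaVertexEquiv (J : V → ℕ) (J' : W → ℕ) :
    ((Σ i : V, Fin (J i)) ⊕ (Σ j : W, Fin (J' j))) ≃
      (Σ x : V ⊕ W, Fin (Sum.elim J J' x)) where
  toFun := Sum.elim (fun p => ⟨Sum.inl p.1, p.2⟩) (fun p => ⟨Sum.inr p.1, p.2⟩)
  invFun := fun p => match p with
    | ⟨Sum.inl i, k⟩ => Sum.inl ⟨i, k⟩
    | ⟨Sum.inr j, k⟩ => Sum.inr ⟨j, k⟩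
  left_inv := by rintro (⟨i, k⟩ | ⟨j, k⟩) <;> rfl
  right_inv := by rintro ⟨(i | j), k⟩ <;> rfl

/-! Since `∅` is a face of both `K` and `L`, a minimal non-face of `K ⋆ L` lies entirely on one
side, where it is a minimal non-face of `K` or of `L`. The full fiber of a set of vertices of
`K ⋆ L` splits into the full fibers of its two sides, so a set avoids the full fibers of the
minimal non-faces of `K ⋆ L` iff each side avoids those of `K`, respectively `L`. -/

namespace Finset

variable {α β : Type*}

lemma disjSum_ssubset_disjSum_iff {s₁ s₂ : Finset α} {t₁ t₂ : Finset β} :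
    s₁.disjSum t₁ ⊂ s₂.disjSum t₂ ↔ s₁ ⊂ s₂ ∧ t₁ ⊆ t₂ ∨ s₁ ⊆ s₂ ∧ t₁ ⊂ t₂ :=
  (sumEquiv.symm.lt_iff_lt (x := (s₁, t₁)) (y := (s₂, t₂))).trans Prod.lt_iff

lemma image_inl_union_image_inr [DecidableEq α] [DecidableEq β] (s : Finset α)
    (t : Finset β) : s.image Sum.inl ∪ t.image Sum.inr = s.disjSum t := by
  ext (x | x) <;> simp

end Finset

open Finset

@[simp] lemma fullCopy_empty (J : V → ℕ) : fullCopy J ∅ = ∅ := by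
  simp [fullCopy]

section Join

variable [DecidableEq V] [DecidableEq W] {K : Set (Finset V)} {L : Set (Finset W)}

lemma mem_joinOf_iff {τ : Finset (V ⊕ W)} : τ ∈ joinOf K L ↔ τ.toLeft ∈ K ∧ τ.toRight ∈ L := by
  simp [joinOf, image_inl_union_image_inr, eq_disjSum_iff]

variable {s : Finset V} {t : Finset W}

lemma disjSum_mem_joinOf_iff : s.disjSum t ∈ joinOf K L ↔ s ∈ K ∧ t ∈ L := by
  simp [mem_joinOf_iff]

lemma MinNonFace.eq_empty_right_of_notMem_left (h : MinNonFace (joinOf K L) (s.disjSum t))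
    (hs : s ∉ K) : t = ∅ := by
  by_contra ht
  have hlt : s.disjSum ∅ ⊂ s.disjSum t :=
    disjSum_ssubset_disjSum_iff.2 (.inr ⟨subset_rfl, empty_ssubset.2 (nonempty_iff_ne_empty.2 ht)⟩)
  exact hs (disjSum_mem_joinOf_iff.1 (h.2 _ hlt)).1

lemma MinNonFace.eq_empty_left_of_notMem_right (h : MinNonFace (joinOf K L) (s.disjSum t))
    (ht : t ∉ L) : s = ∅ := by
  by_contra hs
  have hlt : disjSum ∅ t ⊂ s.disjSum t :=
    disjSum_ssubset_disjSum_iff.2 (.inl ⟨empty_ssubset.2 (nonempty_iff_ne_empty.2 hs), subset_rfl⟩)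
  exact ht (disjSum_mem_joinOf_iff.1 (h.2 _ hlt)).2

lemma minNonFace_joinOf_disjSum_empty_iff (hL : ∅ ∈ L) :
    MinNonFace (joinOf K L) (s.disjSum ∅) ↔ MinNonFace K s := by
  refine and_congr (not_congr (disjSum_mem_joinOf_iff.trans (and_iff_left hL)))
    ⟨fun h a ha => ?_, fun h T hT => ?_⟩
  · exact (disjSum_mem_joinOf_iff.1 (h _ (disjSum_ssubset_disjSum_iff.2 (.inl ⟨ha, subset_rfl⟩)))).1
  · rw [← toLeft_disjSum_toRight (u := T)] at hT ⊢
    rcases disjSum_ssubset_disjSum_iff.1 hT with ⟨hlt, hle⟩ | ⟨-, hlt⟩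
    · rw [subset_empty.1 hle]
      exact disjSum_mem_joinOf_iff.2 ⟨h _ hlt, hL⟩
    · exact absurd hlt (not_ssubset_empty _)

lemma minNonFace_joinOf_empty_disjSum_iff (hK : ∅ ∈ K) :
    MinNonFace (joinOf K L) (disjSum ∅ t) ↔ MinNonFace L t := by
  refine and_congr (not_congr (disjSum_mem_joinOf_iff.trans (and_iff_right hK)))
    ⟨fun h b hb => ?_, fun h T hT => ?_⟩
  · exact (disjSum_mem_joinOf_iff.1 (h _ (disjSum_ssubset_disjSum_iff.2 (.inr ⟨subset_rfl, hb⟩)))).2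
  · rw [← toLeft_disjSum_toRight (u := T)] at hT ⊢
    rcases disjSum_ssubset_disjSum_iff.1 hT with ⟨hlt, -⟩ | ⟨hle, hlt⟩
    · exact absurd hlt (not_ssubset_empty _)
    · rw [subset_empty.1 hle]
      exact disjSum_mem_joinOf_iff.2 ⟨hK, h _ hlt⟩

lemma minNonFace_joinOf_disjSum_iff (hK : ∅ ∈ K) (hL : ∅ ∈ L) :
    MinNonFace (joinOf K L) (s.disjSum t) ↔ MinNonFace K s ∧ t = ∅ ∨ s = ∅ ∧ MinNonFace L t := by
  constructor
  · intro h
    rcases not_and_or.1 (disjSum_mem_joinOf_iff.not.1 h.1) with hs | ht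
    · obtain rfl := h.eq_empty_right_of_notMem_left hs
      exact .inl ⟨(minNonFace_joinOf_disjSum_empty_iff hL).1 h, rfl⟩
    · obtain rfl := h.eq_empty_left_of_notMem_right ht
      exact .inr ⟨rfl, (minNonFace_joinOf_empty_disjSum_iff hK).1 h⟩
  · rintro (⟨hs, rfl⟩ | ⟨rfl, ht⟩)
    exacts [(minNonFace_joinOf_disjSum_empty_iff hL).2 hs,
      (minNonFace_joinOf_empty_disjSum_iff hK).2 ht]

lemma fullCopy_subset_image_sumSigmaVertexEquiv_iff {J : V → ℕ} {J' : W → ℕ}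
    {S : Finset (V ⊕ W)}    {τ : Finset ((Σ i : V, Fin (J i)) ⊕ (Σ j : W, Fin (J' j)))} :
    fullCopy (Sum.elim J J') S ⊆ τ.image (sumSigmaVertexEquiv J J') ↔
      fullCopy J S.toLeft ⊆ τ.toLeft ∧ fullCopy J' S.toRight ⊆ τ.toRight := by
  have he (x) : sumSigmaVertexEquiv J J' x ∈ τ.image (sumSigmaVertexEquiv J J') ↔ x ∈ τ :=
    (sumSigmaVertexEquiv J J').injective.mem_finset_image
  simp only [subset_iff, fullCopy, mem_sigma, mem_univ, and_true, Sum.forall, Sigma.forall,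
    mem_toLeft, mem_toRight]
  exact and_congr (forall₂_congr fun i k => imp_congr_right fun _ => he (.inl ⟨i, k⟩))
    (forall₂_congr fun j k => imp_congr_right fun _ => he (.inr ⟨j, k⟩))

end Join

theorem join_wedgeJ_eq_wedgeJ_join_general [DecidableEq V] [DecidableEq W]
    (K : Set (Finset V)) (L : Set (Finset W))
    (hKne : ∅ ∈ K) (hLne : ∅ ∈ L)
    (J : V → ℕ) (J' : W → ℕ) :
    ∀ τ : Finset ((Σ i : V, Fin (J i)) ⊕ (Σ j : W, Fin (J' j))),
      τ ∈ joinOf (wedgeJ K J) (wedgeJ L J') ↔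
        τ.image (sumSigmaVertexEquiv J J') ∈ wedgeJ (joinOf K L) (Sum.elim J J') := by
  intro τ
  simp only [mem_joinOf_iff, wedgeJ, Set.mem_ofPred_eq,
    fullCopy_subset_image_sumSigmaVertexEquiv_iff]
  constructor
  · rintro ⟨hτl, hτr⟩ S hS ⟨hSl, hSr⟩
    rw [← toLeft_disjSum_toRight (u := S), minNonFace_joinOf_disjSum_iff hKne hLne] at hS
    rcases hS with ⟨hS, -⟩ | ⟨-, hS⟩
    exacts [hτl _ hS hSl, hτr _ hS hSr]
  · intro h
    refine ⟨fun s hs hsτ => h (s.disjSum ∅) ((minNonFace_joinOf_disjSum_empty_iff hLne).2 hs) ?_,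
      fun t ht htτ => h (disjSum ∅ t) ((minNonFace_joinOf_empty_disjSum_iff hKne).2 ht) ?_⟩
    · exact ⟨by rwa [toLeft_disjSum], by simp only [toRight_disjSum, fullCopy_empty, empty_subset]⟩
    · exact ⟨by simp only [toLeft_disjSum, fullCopy_empty, empty_subset], by rwa [toRight_disjSum]⟩

/-- `K(J) ⋆ L(J′) = (K ⋆ L)(J ∪ J′)` for simplicial complexes `K`, `L` on disjoint
vertex sets and vectors `J`, `J′` of positive integers. -/
theorem join_wedgeJ_eq_wedgeJ_join [DecidableEq V] [DecidableEq W]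
    (K : Set (Finset V)) (L : Set (Finset W))
    (hK : ∀ σ ∈ K, ∀ τ ⊆ σ, τ ∈ K) (hL : ∀ σ ∈ L, ∀ τ ⊆ σ, τ ∈ L)
    (hKne : ∅ ∈ K) (hLne : ∅ ∈ L)
    (J : V → ℕ) (J' : W → ℕ) (hJ : ∀ i, 0 < J i) (hJ' : ∀ j, 0 < J' j) :
    ∀ τ : Finset ((Σ i : V, Fin (J i)) ⊕ (Σ j : W, Fin (J' j))),
      τ ∈ joinOf (wedgeJ K J) (wedgeJ L J') ↔
        τ.image (sumSigmaVertexEquiv J J') ∈ wedgeJ (joinOf K L) (Sum.elim J J') :=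
  join_wedgeJ_eq_wedgeJ_join_general K L hKne hLne J J'
end

section
/- Let K be a fan-like simplicial sphere with vertex set V and v ∈ V, and let λ be a complete non-singular characteristic map of dimension n+1 on wed_v(K) with new vertices v₁, v₂, such that {λ(v₁), λ(v₂)} is a unimodular set. Then λ is uniquely determined (up to the data) by its projections proj_{v₁}λ and proj_{v₂}λ: if two such characteristic maps on wed_v(K) agree on both projections, they are equal. -/
variable {V : Type*}

/-- A subset `S` of `ℝⁿ` is star-shaped in `p` if every ray emanating from `p`
intersects `S` once and only once. -/
def StarShapedIn {n : ℕ} (S : Set (EuclideanSpace ℝ (Fin n)))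
    (p : EuclideanSpace ℝ (Fin n)) : Prop :=
  ∀ u : EuclideanSpace ℝ (Fin n), u ≠ 0 → ∃! t : ℝ, 0 ≤ t ∧ p + t • u ∈ S

/-- `K` is a fan-like simplicial sphere of dimension `n − 1`: its geometric realization
embeds into `ℝⁿ` as a star-shaped set (equivalently, there is a complete fan over `K`). -/
def FanLike [Fintype V] (K : Set (Finset V)) (n : ℕ) : Prop :=
  ∃ (S : Set (EuclideanSpace ℝ (Fin n))) (p : EuclideanSpace ℝ (Fin n)),
    Nonempty (realization K ≃ₜ S) ∧ StarShapedIn S p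

/-- A subset of a `ℤ`-module is unimodular if it is part of a `ℤ`-basis. -/
def IsUnimodularSet {M : Type*} [AddCommGroup M] [Module ℤ M] (s : Set M) : Prop :=
  ∃ (ι : Type) (b : Module.Basis ι ℤ M), s ⊆ Set.range b

/-- `(K, lam)` is a characteristic map over `ℤ`: the vectors assigned to the vertices of
each face of `K` are linearly independent over `ℝ`. -/
def IsCharMapInt {W : Type*} {N : ℕ} (K : Set (Finset W)) (lam : W → (Fin N → ℤ)) :
    Prop :=
  ∀ σ ∈ K, LinearIndependent ℝ (fun w : σ => fun j => ((lam w.1 j : ℝ)))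

/-- `(K, lam)` is non-singular: for every face of `K` the assigned vectors positively
span a non-singular cone, i.e. they form a unimodular set. -/
def NonSingularInt {W : Type*} {N : ℕ} (K : Set (Finset W)) (lam : W → (Fin N → ℤ)) :
    Prop :=
  ∀ σ ∈ K, IsUnimodularSet (lam '' ↑σ)

/-! The difference `lam' w - lam w` lies in both `⟨lam v₁⟩` and `⟨lam v₂⟩`. Since `{v₁, v₂}` is an
edge of the wedge, `lam v₁` and `lam v₂` are linearly independent, so these two lines meet only
in `0`. -/

theorem pair_mem_wedgeAt [DecidableEq V] {K : Set (Finset V)} {v : V}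
    (hv : ({v} : Finset V) ∈ K) :
    ({Sum.inl v, Sum.inr ()} : Finset (V ⊕ Unit)) ∈ wedgeAt K v :=
  ⟨{Sum.inl v, Sum.inr ()}, ∅, subset_rfl, by simp, Or.inl ⟨Finset.notMem_empty v, hv⟩⟩

theorem IsCharMapInt.linearIndepOn {W : Type*} {N : ℕ} {K : Set (Finset W)}
    {lam : W → (Fin N → ℤ)} (hlam : IsCharMapInt K lam) {σ : Finset W} (hσ : σ ∈ K) :
    LinearIndepOn ℤ lam ↑σ :=
  LinearIndepOn.of_comp ((Int.castAddHom ℝ).toIntLinearMap.compLeft (Fin N))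
    ((hlam σ hσ).restrict_scalars' ℤ)

theorem LinearIndepOn.eq_zero_of_mem_span_singleton {R M ι : Type*} [Ring R] [AddCommGroup M]
    [Module R M] {f : ι → M} {i j : ι} (hf : LinearIndepOn R f {i, j}) (hij : i ≠ j) {d : M}
    (hi : d ∈ R ∙ f i) (hj : d ∈ R ∙ f j) : d = 0 := by
  obtain ⟨a, rfl⟩ := Submodule.mem_span_singleton.mp hi
  obtain ⟨b, hb⟩ := Submodule.mem_span_singleton.mp hj
  have hab : a • f i + (-b) • f j = 0 := by rw [neg_smul, hb, add_neg_cancel]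
  rw [((LinearIndepOn.pair_iff f hij).mp hf a (-b) hab).1, zero_smul]

theorem LinearIndepOn.eq_of_mkQ_eq {R M ι : Type*} [Ring R] [AddCommGroup M] [Module R M]
    {f : ι → M} {i j : ι} (hf : LinearIndepOn R f {i, j}) (hij : i ≠ j) {x y : M}
    (hi : (R ∙ f i).mkQ x = (R ∙ f i).mkQ y) (hj : (R ∙ f j).mkQ x = (R ∙ f j).mkQ y) :
    x = y :=
  sub_eq_zero.mp <| hf.eq_zero_of_mem_span_singleton hij
    ((Submodule.Quotient.eq _).mp hi) ((Submodule.Quotient.eq _).mp hj)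

theorem charMap_wedge_determined_by_projections_general [DecidableEq V] (n : ℕ)
    (K : Set (Finset V)) (v : V) (hv : ({v} : Finset V) ∈ K)
    (lam lam' : (V ⊕ Unit) → (Fin (n + 1) → ℤ))
    (hchar : IsCharMapInt (wedgeAt K v) lam)
    (hproj1 : ∀ w : V ⊕ Unit, ({w} : Finset (V ⊕ Unit)) ∈ wedgeAt K v →
      (Submodule.span ℤ {lam (Sum.inl v)}).mkQ (lam' w) =
        (Submodule.span ℤ {lam (Sum.inl v)}).mkQ (lam w))
    (hproj2 : ∀ w : V ⊕ Unit, ({w} : Finset (V ⊕ Unit)) ∈ wedgeAt K v →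
      (Submodule.span ℤ {lam (Sum.inr ())}).mkQ (lam' w) =
        (Submodule.span ℤ {lam (Sum.inr ())}).mkQ (lam w)) :
    ∀ w : V ⊕ Unit, ({w} : Finset (V ⊕ Unit)) ∈ wedgeAt K v → lam' w = lam w := by
  intro w hw
  have hedge := hchar.linearIndepOn (pair_mem_wedgeAt hv)
  rw [Finset.coe_pair] at hedge
  exact hedge.eq_of_mkQ_eq Sum.inl_ne_inr (hproj1 w hw) (hproj2 w hw)

/-- Let `K` be a fan-like simplicial sphere, `v` a vertex of `K`, and let `lam`, `lam'`
be complete non-singular characteristic maps of dimension `n + 1` on `wed_v(K)` (with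
new vertices `v₁ = Sum.inl v` and `v₂ = Sum.inr ()`) such that `{lam v₁, lam v₂}` is a
unimodular set.  If `lam` and `lam'` agree at `v₁`, `v₂` and have the same projections
`proj_{v₁}` and `proj_{v₂}` (i.e. they agree in the quotient lattices
`ℤ^{n+1}/⟨lam v₁⟩` and `ℤ^{n+1}/⟨lam v₂⟩` at every vertex), then they are equal. -/
theorem charMap_wedge_determined_by_projections [Fintype V] [DecidableEq V] (n : ℕ)
    (K : Set (Finset V)) (hK : IsComplex K) (v : V) (hv : ({v} : Finset V) ∈ K)
    (hfan : FanLike K n)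
    (lam lam' : (V ⊕ Unit) → (Fin (n + 1) → ℤ))
    (hchar : IsCharMapInt (wedgeAt K v) lam)
    (hchar' : IsCharMapInt (wedgeAt K v) lam')
    (hns : NonSingularInt (wedgeAt K v) lam)
    (hns' : NonSingularInt (wedgeAt K v) lam')
    (huni : IsUnimodularSet {lam (Sum.inl v), lam (Sum.inr ())})
    (h1 : lam' (Sum.inl v) = lam (Sum.inl v))
    (h2 : lam' (Sum.inr ()) = lam (Sum.inr ()))
    (hproj1 : ∀ w : V ⊕ Unit, ({w} : Finset (V ⊕ Unit)) ∈ wedgeAt K v →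
      (Submodule.span ℤ {lam (Sum.inl v)}).mkQ (lam' w) =
        (Submodule.span ℤ {lam (Sum.inl v)}).mkQ (lam w))
    (hproj2 : ∀ w : V ⊕ Unit, ({w} : Finset (V ⊕ Unit)) ∈ wedgeAt K v →
      (Submodule.span ℤ {lam (Sum.inr ())}).mkQ (lam' w) =
        (Submodule.span ℤ {lam (Sum.inr ())}).mkQ (lam w)) :
    ∀ w : V ⊕ Unit, ({w} : Finset (V ⊕ Unit)) ∈ wedgeAt K v → lam' w = lam w :=
  charMap_wedge_determined_by_projections_general n K v hv lam lam' hchar hproj1 hproj2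
end

section
/- Let λ be a ℤ₂-characteristic map on wed_v(K), where K is a fan-like simplicial sphere. Then λ is uniquely determined by its two projections proj_{v₁}λ and proj_{v₂}λ, and λ is non-singular over ℤ₂ if and only if both projections are non-singular over ℤ₂. -/
variable {V : Type*}

/-- A `ℤ₂`-characteristic map on a complex `K`: the vectors assigned to the vertices of
each face are linearly independent over `ℤ₂`; since the maximal faces of a fan-like
sphere of dimension `N − 1` have `N` vertices, this is precisely non-singularity. -/
def IsCharMapZ2 {W : Type*} {N : ℕ} (K : Set (Finset W)) (lam : W → (Fin N → ZMod 2)) :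
    Prop :=
  ∀ σ ∈ K, LinearIndependent (ZMod 2) (fun w : σ => lam w.1)

section AuxLI

section Aux
variable {F M W : Type*} [Field F] [AddCommGroup M] [Module F M] [DecidableEq W]
  (lam : W → M)

theorem li_quot_of_li {a : W} {σ : Finset W} (ha : a ∉ σ)
    (h : LinearIndependent F (fun w : (insert a σ : Finset W) => lam w.1)) :
    LinearIndependent F
      (fun w : σ => (Submodule.span F {lam a}).mkQ (lam w.1)) := by
  rw [Fintype.linearIndependent_iff] at h ⊢
  intro g hg
  have hmem : (∑ w : σ, g w • lam w.1) ∈ Submodule.span F {lam a} := by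
    have h2 : (Submodule.span F {lam a}).mkQ (∑ w : σ, g w • lam w.1) = 0 := by
      rw [map_sum]; simp only [map_smul]; exact hg
    rwa [Submodule.mkQ_apply, Submodule.Quotient.mk_eq_zero] at h2
  obtain ⟨c, hc⟩ := Submodule.mem_span_singleton.mp hmem
  set G : {x // x ∈ insert a σ} → F :=
    fun w => if hw : w.1 ∈ σ then g ⟨w.1, hw⟩ else -c with hG
  have hsum : ∑ w : {x // x ∈ insert a σ}, G w • lam w.1 = 0 := by
    have h1 : ∑ w : {x // x ∈ insert a σ}, G w • lam w.1
        = ∑ x ∈ insert a σ, ((if hx : x ∈ σ then g ⟨x, hx⟩ else -c : F) • lam x) := by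
      rw [Finset.univ_eq_attach]
      exact Finset.sum_attach (insert a σ)
        (fun x => (if hx : x ∈ σ then g ⟨x, hx⟩ else -c : F) • lam x)
    rw [h1, Finset.sum_insert ha, dif_neg ha]
    have h2 : ∑ x ∈ σ, ((if hx : x ∈ σ then g ⟨x, hx⟩ else -c : F) • lam x)
        = ∑ w : σ, g w • lam w.1 := by
      rw [Finset.univ_eq_attach, ← Finset.sum_attach σ
        (fun x => ((if hx : x ∈ σ then g ⟨x, hx⟩ else -c : F) • lam x))]
      exact Finset.sum_congr rfl fun w _ => by rw [dif_pos w.2]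
    rw [h2, ← hc, neg_smul, neg_add_cancel]
  intro w
  have := h G hsum ⟨w.1, Finset.mem_insert_of_mem w.2⟩
  rw [hG] at this
  simpa [dif_pos w.2] using this

theorem li_of_li_quot {a : W} {σ : Finset W} (ha : a ∉ σ) (h0 : lam a ≠ 0)
    (h : LinearIndependent F
      (fun w : σ => (Submodule.span F {lam a}).mkQ (lam w.1))) :
    LinearIndependent F (fun w : (insert a σ : Finset W) => lam w.1) := by
  rw [Fintype.linearIndependent_iff] at h ⊢
  intro g hg
  have haI : a ∈ insert a σ := Finset.mem_insert_self a σ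
  have hq : ∑ w : σ, g ⟨w.1, Finset.mem_insert_of_mem w.2⟩ •
      (Submodule.span F {lam a}).mkQ (lam w.1) = 0 := by
    have hmk : (Submodule.span F {lam a}).mkQ
        (∑ w : {x // x ∈ insert a σ}, g w • lam w.1) = 0 := by rw [hg, map_zero]
    rw [map_sum] at hmk
    simp only [map_smul] at hmk
    have h1 : ∑ w : {x // x ∈ insert a σ}, g w • (Submodule.span F {lam a}).mkQ (lam w.1)
        = ∑ x ∈ insert a σ, (if hx : x ∈ insert a σ then
            g ⟨x, hx⟩ • (Submodule.span F {lam a}).mkQ (lam x) else 0) := by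
      rw [Finset.univ_eq_attach, ← Finset.sum_attach (insert a σ)
        (fun x => if hx : x ∈ insert a σ then
            g ⟨x, hx⟩ • (Submodule.span F {lam a}).mkQ (lam x) else 0)]
      exact Finset.sum_congr rfl fun w _ => by rw [dif_pos w.2]
    rw [h1, Finset.sum_insert ha] at hmk
    have hza : (Submodule.span F {lam a}).mkQ (lam a) = 0 := by
      rw [Submodule.mkQ_apply, Submodule.Quotient.mk_eq_zero]
      exact Submodule.mem_span_singleton_self (lam a)
    rw [dif_pos haI, hza, smul_zero, zero_add] at hmk
    have h2 : ∑ w ∈ σ.attach, g ⟨w.1, Finset.mem_insert_of_mem w.2⟩ •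
        (Submodule.span F {lam a}).mkQ (lam w.1)
        = ∑ x ∈ σ, (if hx : x ∈ insert a σ then
            g ⟨x, hx⟩ • (Submodule.span F {lam a}).mkQ (lam x) else 0) := by
      rw [← Finset.sum_attach σ (fun x => if hx : x ∈ insert a σ then
            g ⟨x, hx⟩ • (Submodule.span F {lam a}).mkQ (lam x) else 0)]
      exact Finset.sum_congr rfl fun w _ => by
        rw [dif_pos (Finset.mem_insert_of_mem w.2)]
    rw [Finset.univ_eq_attach, h2]
    exact hmk
  have hzero : ∀ w : σ, g ⟨w.1, Finset.mem_insert_of_mem w.2⟩ = 0 := h _ hq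
  have hga : g ⟨a, haI⟩ = 0 := by
    have h1 : ∑ w : {x // x ∈ insert a σ}, g w • lam w.1
        = ∑ x ∈ insert a σ, (if hx : x ∈ insert a σ then g ⟨x, hx⟩ • lam x else 0) := by
      rw [Finset.univ_eq_attach, ← Finset.sum_attach (insert a σ)
        (fun x => if hx : x ∈ insert a σ then g ⟨x, hx⟩ • lam x else 0)]
      exact Finset.sum_congr rfl fun w _ => by rw [dif_pos w.2]
    rw [h1, Finset.sum_insert ha, dif_pos haI] at hg
    have h2 : ∑ x ∈ σ, (if hx : x ∈ insert a σ then g ⟨x, hx⟩ • lam x else 0) = 0 := by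
      refine Finset.sum_eq_zero fun x hx => ?_
      rw [dif_pos (Finset.mem_insert_of_mem hx), hzero ⟨x, hx⟩, zero_smul]
    rw [h2, add_zero, smul_eq_zero] at hg
    exact hg.resolve_right h0
  intro w
  rcases Finset.mem_insert.mp w.2 with hw | hw
  · have : w = ⟨a, haI⟩ := Subtype.ext hw
    rw [this]; exact hga
  · exact hzero ⟨w.1, hw⟩

theorem pair_coeffs {x y : W} (hxy : x ≠ y)
    (h : LinearIndependent F (fun w : ({x, y} : Finset W) => lam w.1))
    (a b : F) (hab : a • lam x + b • lam y = 0) : a = 0 ∧ b = 0 := by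
  rw [Fintype.linearIndependent_iff] at h
  set G : {w // w ∈ ({x, y} : Finset W)} → F := fun w => if w.1 = x then a else b with hG
  have hsum : ∑ w : {w // w ∈ ({x, y} : Finset W)}, G w • lam w.1 = 0 := by
    have h1 : ∑ w : {w // w ∈ ({x, y} : Finset W)}, G w • lam w.1
        = ∑ z ∈ ({x, y} : Finset W), ((if z = x then a else b : F) • lam z) := by
      rw [Finset.univ_eq_attach]
      exact Finset.sum_attach ({x, y} : Finset W)
        (fun z => (if z = x then a else b : F) • lam z)
    rw [h1, Finset.sum_pair hxy, if_pos rfl, if_neg (Ne.symm hxy)]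
    exact hab
  have hx' : x ∈ ({x, y} : Finset W) := by simp
  have hy' : y ∈ ({x, y} : Finset W) := by simp
  constructor
  · have := h G hsum ⟨x, hx'⟩
    simpa [hG] using this
  · have := h G hsum ⟨y, hy'⟩
    simpa [hG, Ne.symm hxy] using this

end Aux


section WedgeFacts
variable [DecidableEq V]

theorem wedge_pair {K : Set (Finset V)} {v : V} (hv : ({v} : Finset V) ∈ K) :
    ({Sum.inl v, Sum.inr ()} : Finset (V ⊕ Unit)) ∈ wedgeAt K v := by
  refine ⟨{Sum.inl v, Sum.inr ()}, ∅, subset_rfl, by simp, Or.inl ⟨Finset.notMem_empty v, by simpa using hv⟩⟩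

theorem wedge_insert_inr {K : Set (Finset V)} {v : V} {τ : Finset (V ⊕ Unit)}
    (hτ : τ ∈ wedgeAt K v) (h1 : Sum.inl v ∉ τ) :
    insert (Sum.inr ()) τ ∈ wedgeAt K v := by
  obtain ⟨s, σ, hs, rfl, hor⟩ := hτ
  refine ⟨insert (Sum.inr ()) s, σ, Finset.insert_subset_iff.mpr ⟨by simp, hs⟩,
    (Finset.insert_union _ _ _).symm, ?_⟩
  have hns : Sum.inl v ∉ insert (Sum.inr ()) s := by
    intro hmem
    rcases Finset.mem_insert.mp hmem with h | h
    · exact absurd h (by simp)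
    · exact h1 (Finset.mem_union_left _ h)
  have hne : insert (Sum.inr ()) s ≠ {Sum.inl v, Sum.inr ()} := by
    intro he
    apply hns
    rw [he]; simp
  rcases hor with h | h
  · exact Or.inl h
  · exact Or.inr ⟨hne, h.2⟩

end WedgeFacts

/-- Let `K` be a fan-like simplicial sphere and `lam` a `ℤ₂`-characteristic map on
`wed_v(K)` (new vertices `v₁ = Sum.inl v`, `v₂ = Sum.inr ()`).  Then (1) `lam` is
uniquely determined by its two projections `proj_{v₁} lam` and `proj_{v₂} lam`, and
(2) `lam` is non-singular over `ℤ₂` iff both projections are non-singular over `ℤ₂`. -/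
theorem charMapZ2_wedge_projections [Fintype V] [DecidableEq V] (n : ℕ)
    (K : Set (Finset V)) (hK : IsComplex K) (v : V) (hv : ({v} : Finset V) ∈ K)
    (hfan : FanLike K n)
    (lam : (V ⊕ Unit) → (Fin (n + 1) → ZMod 2)) :
    (IsCharMapZ2 (wedgeAt K v) lam →
      ∀ lam' : (V ⊕ Unit) → (Fin (n + 1) → ZMod 2),
        IsCharMapZ2 (wedgeAt K v) lam' →
        lam' (Sum.inl v) = lam (Sum.inl v) →
        lam' (Sum.inr ()) = lam (Sum.inr ()) →
        (∀ w : V ⊕ Unit, ({w} : Finset (V ⊕ Unit)) ∈ wedgeAt K v →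
          (Submodule.span (ZMod 2) {lam (Sum.inl v)}).mkQ (lam' w) =
            (Submodule.span (ZMod 2) {lam (Sum.inl v)}).mkQ (lam w)) →
        (∀ w : V ⊕ Unit, ({w} : Finset (V ⊕ Unit)) ∈ wedgeAt K v →
          (Submodule.span (ZMod 2) {lam (Sum.inr ())}).mkQ (lam' w) =
            (Submodule.span (ZMod 2) {lam (Sum.inr ())}).mkQ (lam w)) →
        ∀ w : V ⊕ Unit, ({w} : Finset (V ⊕ Unit)) ∈ wedgeAt K v → lam' w = lam w) ∧
    (IsCharMapZ2 (wedgeAt K v) lam ↔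
      ((∀ σ ∈ linkOf (wedgeAt K v) (Sum.inl v),
          LinearIndependent (ZMod 2) (fun w : σ =>
            (Submodule.span (ZMod 2) {lam (Sum.inl v)}).mkQ (lam w.1))) ∧
       (∀ σ ∈ linkOf (wedgeAt K v) (Sum.inr ()),
          LinearIndependent (ZMod 2) (fun w : σ =>
            (Submodule.span (ZMod 2) {lam (Sum.inr ())}).mkQ (lam w.1))))) :=  by
  classical
  have hv12 : (Sum.inl v : V ⊕ Unit) ≠ Sum.inr () := by simp
  have hpair : ({Sum.inl v, Sum.inr ()} : Finset (V ⊕ Unit)) ∈ wedgeAt K v := wedge_pair hv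
  have hlink1 : ({Sum.inr ()} : Finset (V ⊕ Unit)) ∈ linkOf (wedgeAt K v) (Sum.inl v) := by
    refine ⟨by simp, ?_⟩
    simpa using hpair
  have hlink2 : ({Sum.inl v} : Finset (V ⊕ Unit)) ∈ linkOf (wedgeAt K v) (Sum.inr ()) := by
    refine ⟨by simp, ?_⟩
    have : insert (Sum.inr () : V ⊕ Unit) {Sum.inl v} = {Sum.inl v, Sum.inr ()} :=
      Finset.pair_comm _ _
    rw [this]; exact hpair
  constructor
  · -- uniqueness
    intro hchar lam' _hchar' _h1 _h2 hproj1 hproj2 w hw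
    have hpairLI := hchar _ hpair
    have key := pair_coeffs lam hv12 hpairLI
    have hd1 : lam' w - lam w ∈ Submodule.span (ZMod 2) {lam (Sum.inl v)} := by
      have h := hproj1 w hw
      rwa [Submodule.mkQ_apply, Submodule.mkQ_apply, Submodule.Quotient.eq] at h
    have hd2 : lam' w - lam w ∈ Submodule.span (ZMod 2) {lam (Sum.inr ())} := by
      have h := hproj2 w hw
      rwa [Submodule.mkQ_apply, Submodule.mkQ_apply, Submodule.Quotient.eq] at h
    obtain ⟨a, ha⟩ := Submodule.mem_span_singleton.mp hd1
    obtain ⟨b, hb⟩ := Submodule.mem_span_singleton.mp hd2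
    have hab : a • lam (Sum.inl v) + (-b) • lam (Sum.inr ()) = 0 := by
      rw [neg_smul, ha, hb, add_neg_cancel]
    have h0 := (key a (-b) hab).1
    have : lam' w - lam w = 0 := by rw [← ha, h0, zero_smul]
    exact sub_eq_zero.mp this
  · constructor
    · intro hchar
      constructor
      · intro σ hσ
        exact li_quot_of_li lam hσ.1 (hchar _ hσ.2)
      · intro σ hσ
        exact li_quot_of_li lam hσ.1 (hchar _ hσ.2)
    · rintro ⟨h1, h2⟩ τ hτ
      have hne2 : lam (Sum.inr ()) ≠ 0 := by
        intro h0
        have := (h1 _ hlink1).ne_zero ⟨Sum.inr (), Finset.mem_singleton_self _⟩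
        apply this
        rw [h0, map_zero]
      have hne1 : lam (Sum.inl v) ≠ 0 := by
        intro h0
        have := (h2 _ hlink2).ne_zero ⟨Sum.inl v, Finset.mem_singleton_self _⟩
        apply this
        rw [h0, map_zero]
      by_cases hw1 : Sum.inl v ∈ τ
      · have hστ : insert (Sum.inl v) (τ.erase (Sum.inl v)) = τ := Finset.insert_erase hw1
        have hlk : τ.erase (Sum.inl v) ∈ linkOf (wedgeAt K v) (Sum.inl v) :=
          ⟨Finset.notMem_erase _ _, by rwa [hστ]⟩
        have hli := li_of_li_quot lam (Finset.notMem_erase (Sum.inl v) τ) hne1 (h1 _ hlk)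
        rwa [hστ] at hli
      · by_cases hw2 : Sum.inr () ∈ τ
        · have hστ : insert (Sum.inr ()) (τ.erase (Sum.inr ())) = τ := Finset.insert_erase hw2
          have hlk : τ.erase (Sum.inr ()) ∈ linkOf (wedgeAt K v) (Sum.inr ()) :=
            ⟨Finset.notMem_erase _ _, by rwa [hστ]⟩
          have hli := li_of_li_quot lam (Finset.notMem_erase (Sum.inr ()) τ) hne2 (h2 _ hlk)
          rwa [hστ] at hli
        · have hlk : τ ∈ linkOf (wedgeAt K v) (Sum.inr ()) :=
            ⟨hw2, wedge_insert_inr hτ hw1⟩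
          exact LinearIndependent.of_comp (Submodule.span (ZMod 2) {lam (Sum.inr ())}).mkQ
            (h2 _ hlk)
end AuxLI
end

section
/- There is no complete non-singular fan-giving characteristic map of dimension 4 over the boundary complex of the 4-dimensional cyclic polytope with 7 vertices P*_[7] (the simplicial 4-polytope whose Gale diagram is the heptagon with all labels 1). Equivalently, the system of determinant conditions imposed by positivity on the 4×7 characteristic matrix (I₄ | v₅ v₆ v₇), where the maximal simplices and signs are as listed (1234:+, 1236:−, 1246:+, 1347:−, 1356:−, 1357:+, 1456:+, 1457:−, 2347:+, 2367:−, 2456:−, 2457:+, 2567:+, 3567:−), has no integer solution. -/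
/-!
Write `a, b, c` for the vectors `lam 4, lam 5, lam 6` assigned to the last three vertices
(vertices and coordinates are indexed from `0`). Once the first four vectors form the standard
basis, each facet condition is a condition on a maximal minor of the `4 × 3` matrix `(a b c)`
bordered by basis vectors. The four facets containing three basis vertices pin
`b 3 = b 2 = c 1 = c 0 = -1`, after which the facet `1256` reads `b 0 * c 3 = 0`.
If `b 0 = 0`, the conditions force `a 0 = -1`, `a 2 = c 2 - 1`, `a 3 = c 3` and
`c 3 * (a 1 + 1) = -1`, and both unit solutions violate a condition. If `c 3 = 0`, they force
`a 3 = -1`, `a 0 = b 0`, `a 2 = -2`, hence `a 0 = c 2 = a 1 = 1`, and then the facets `0245`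
and `0345` demand `b 1 = 2` and `b 1 = 1`.
-/

/-- The `4 × 4` integer matrix whose columns are the vectors assigned by `lam` to the
vertices `p, q, r, s` (in this order). -/
def colMat (lam : Fin 7 → Fin 4 → ℤ) (p q r s : Fin 7) : Matrix (Fin 4) (Fin 4) ℤ :=
  Matrix.of fun i j => lam (![p, q, r, s] j) i

theorem Matrix.det_fin_four {R : Type*} [CommRing R] (A : Matrix (Fin 4) (Fin 4) R) :
    A.det =
      A 0 0 * (A 1 1 * (A 2 2 * A 3 3 - A 2 3 * A 3 2) - A 1 2 * (A 2 1 * A 3 3 - A 2 3 * A 3 1)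
          + A 1 3 * (A 2 1 * A 3 2 - A 2 2 * A 3 1))
        - A 0 1 * (A 1 0 * (A 2 2 * A 3 3 - A 2 3 * A 3 2) - A 1 2 * (A 2 0 * A 3 3 - A 2 3 * A 3 0)
          + A 1 3 * (A 2 0 * A 3 2 - A 2 2 * A 3 0))
        + A 0 2 * (A 1 0 * (A 2 1 * A 3 3 - A 2 3 * A 3 1) - A 1 1 * (A 2 0 * A 3 3 - A 2 3 * A 3 0)
          + A 1 3 * (A 2 0 * A 3 1 - A 2 1 * A 3 0))
        - A 0 3 * (A 1 0 * (A 2 1 * A 3 2 - A 2 2 * A 3 1) - A 1 1 * (A 2 0 * A 3 2 - A 2 2 * A 3 0)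
          + A 1 2 * (A 2 0 * A 3 1 - A 2 1 * A 3 0)) := by
  simp [Matrix.det_succ_row_zero, Fin.sum_univ_succ, Fin.succAbove]
  ring

theorem false_of_P7_minor_equations (a b c : Fin 4 → ℤ)
    (h0125 : b 3 = -1) (h0135 : -b 2 = 1) (h0236 : c 1 = -1) (h1236 : -c 0 = 1)
    (h0245 : -(a 1 * b 3 - a 3 * b 1) = -1) (h0246 : -(a 1 * c 3 - a 3 * c 1) = 1)
    (h0345 : a 1 * b 2 - a 2 * b 1 = 1) (h0346 : a 1 * c 2 - a 2 * c 1 = -1)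
    (h1256 : b 0 * c 3 - b 3 * c 0 = -1)
    (h1345 : -(a 0 * b 2 - a 2 * b 0) = -1) (h1346 : -(a 0 * c 2 - a 2 * c 0) = 1)
    (h1456 : -(a 0 * (b 2 * c 3 - b 3 * c 2) - a 2 * (b 0 * c 3 - b 3 * c 0)
      + a 3 * (b 0 * c 2 - b 2 * c 0)) = 1)
    (h2456 : a 0 * (b 1 * c 3 - b 3 * c 1) - a 1 * (b 0 * c 3 - b 3 * c 0)
      + a 3 * (b 0 * c 1 - b 1 * c 0) = -1) : False := by
  have hb2 : b 2 = -1 := by linarith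
  have hc0 : c 0 = -1 := by linarith
  simp only [h0125, hb2, h0236, hc0] at *
  rcases mul_eq_zero.mp (show b 0 * c 3 = 0 by linarith) with hb0 | hc3
  · simp only [hb0] at *
    have ha0 : a 0 = -1 := by linarith
    have ha2 : a 2 = c 2 - 1 := by grind
    have ha3 : a 3 = c 3 := by grind
    have hunit : c 3 * (a 1 + 1) = -1 := by grind
    rcases Int.eq_one_or_neg_one_of_mul_eq_neg_one' hunit with ⟨hc3, ha1⟩ | ⟨hc3, ha1⟩ <;> grind
  · simp only [hc3] at *
    have ha3 : a 3 = -1 := by linarith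
    have ha0 : a 0 = b 0 := by grind
    have ha2 : a 2 = -2 := by grind
    grind

/-- There is no complete non-singular fan-giving characteristic map of dimension `4`
over the boundary complex of the `4`-dimensional cyclic polytope with `7` vertices
`P*_[7]`: the system of determinant conditions imposed by positivity on the
characteristic matrix `(I₄ | v₅ v₆ v₇)` (signs `1234:+, 1236:−, 1246:+, 1347:−, 1356:−,
1357:+, 1456:+, 1457:−, 2347:+, 2367:−, 2456:−, 2457:+, 2567:+, 3567:−`, vertices
`1, …, 7` indexed by `0, …, 6`) has no integer solution. -/
theorem no_toric_manifold_over_P7 :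
    ¬ ∃ lam : Fin 7 → Fin 4 → ℤ,
      lam 0 = Pi.single 0 1 ∧ lam 1 = Pi.single 1 1 ∧
      lam 2 = Pi.single 2 1 ∧ lam 3 = Pi.single 3 1 ∧
      (colMat lam 0 1 2 3).det = 1 ∧
      (colMat lam 0 1 2 5).det = -1 ∧
      (colMat lam 0 1 3 5).det = 1 ∧
      (colMat lam 0 2 3 6).det = -1 ∧
      (colMat lam 0 2 4 5).det = -1 ∧
      (colMat lam 0 2 4 6).det = 1 ∧
      (colMat lam 0 3 4 5).det = 1 ∧
      (colMat lam 0 3 4 6).det = -1 ∧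
      (colMat lam 1 2 3 6).det = 1 ∧
      (colMat lam 1 2 5 6).det = -1 ∧
      (colMat lam 1 3 4 5).det = -1 ∧
      (colMat lam 1 3 4 6).det = 1 ∧
      (colMat lam 1 4 5 6).det = 1 ∧
      (colMat lam 2 4 5 6).det = -1 := by
  rintro ⟨lam, h0, h1, h2, h3, -, e0125, e0135, e0236, e0245, e0246, e0345, e0346, e1236, e1256,
    e1345, e1346, e1456, e2456⟩
  simp only [colMat, Matrix.det_fin_four, Matrix.of_apply, Matrix.cons_val_zero,
    Matrix.cons_val_one, Matrix.cons_val_two, Matrix.cons_val_three, Matrix.head_cons,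
    Matrix.tail_cons, h0, h1, h2, h3, Pi.single_apply, Fin.reduceEq, ↓reduceIte]
    at e0125 e0135 e0236 e0245 e0246 e0345 e0346 e1236 e1256 e1345 e1346 e1456 e2456
  exact false_of_P7_minor_equations (lam 4) (lam 5) (lam 6)
    (by linear_combination e0125) (by linear_combination e0135) (by linear_combination e0236)
    (by linear_combination e1236) (by linear_combination e0245) (by linear_combination e0246)
    (by linear_combination e0345) (by linear_combination e0346) (by linear_combination e1256)
    (by linear_combination e1345) (by linear_combination e1346) (by linear_combination e1456)
    (by linear_combination e2456)
end

section
/- Let P₅ be the pentagon and J = (a₁,…,a₅) a vector of positive integers. The number of Davis–Januszkiewicz equivalence classes of small covers over P₅(J) = [a₁,a₃,a₅,a₂,a₄] is 2^{a₁+a₄−1} + 2^{a₂+a₅−1} + 2^{a₃+a₁−1} + 2^{a₄+a₂−1} + 2^{a₅+a₃−1} − 5. -/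
variable {V : Type*}

/-- The boundary complex of the pentagon `P₅`: the 5-cycle on `ℤ₅`, whose faces are the
subsets of the edges `{i, i+1}`. -/
def pentagonComplex : Set (Finset (ZMod 5)) :=
  {σ | ∃ i : ZMod 5, σ ⊆ {i, i + 1}}

/-- `lam` is a non-singular `ℤ₂`-characteristic map on `∂(P₅(a))* = K₅(a)`:
the vectors assigned to the vertices of every face are linearly independent over `ℤ₂`. -/
def IsNonsingularZ2 (a : ZMod 5 → ℕ)
    (lam : (Σ i : ZMod 5, Fin (a i)) → (Fin ((∑ i : ZMod 5, a i) - 3) → ZMod 2)) :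
    Prop :=
  ∀ σ ∈ wedgeJ pentagonComplex a, LinearIndependent (ZMod 2) (fun w : σ => lam w.1)

/-!
Fix the facet `F` of `K(a)` obtained by removing one vertex from each of the blocks `2, 3, 4`
(the spare vertices). A non-singular `λ` maps `F` to a basis, so each Davis–Januszkiewicz class
contains exactly one `λ` sending `F` to the standard basis, and such a `λ` is determined by
`r : F → 𝔽₂³`, the coordinates of the images of the three spare vertices. Extending `r` by the
standard basis vectors on the spare vertices to `ρ`, the kernel of `λ` is
`{w ↦ c ⬝ᵥ ρ w | c ∈ 𝔽₂³}`, so `λ` is non-singular iff for every `c ≠ 0` the support of this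
kernel vector is a non-face, i.e. `c ⬝ᵥ ρ ≡ 1` on both blocks of some diagonal `{j, j + 2}`.
This depends only on the five sets of values of `ρ` on the blocks, and a finite search shows that
it holds iff these sets lie in one of six shapes, each a product of singletons and two pairs
sitting on the blocks of one diagonal (the diagonal `{2, 4}` of two spare blocks occurs twice).
Counting the product sets of `r` and correcting by inclusion–exclusion (distinct shapes share at
most one `r`, exactly five pairs of shapes do, and no three) gives the formula.
-/

namespace PentagonWedge

open Finset

theorem sum_card_eq_card_biUnion_add_sum_card_inter {ι α : Type*} [LinearOrder ι] [DecidableEq α]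
    (s : Finset ι) (F : ι → Finset α)
    (h : ∀ i ∈ s, ∀ j ∈ s, ∀ k ∈ s, i < j → j < k → F i ∩ F j ∩ F k = ∅) :
    ∑ i ∈ s, #(F i) = #(s.biUnion F) + ∑ i ∈ s, ∑ j ∈ s with i < j, #(F i ∩ F j) := by
  induction s using Finset.induction_on_max with
  | empty => simp
  | insert m s hlt ih =>
    have hm : m ∉ s := fun hm => lt_irrefl m (hlt m hm)
    have hdisj : (s : Set ι).PairwiseDisjoint fun i => F m ∩ F i := by
      intro i hi j hj hij
      rw [Function.onFun, disjoint_iff_inf_le]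
      intro x hx
      simp only [inf_eq_inter, mem_inter] at hx
      rcases lt_or_gt_of_ne hij with hij | hij
      · have := h i (mem_insert_of_mem hi) j (mem_insert_of_mem hj) m (mem_insert_self m s) hij
          (hlt j hj)
        simp [← this, hx]
      · have := h j (mem_insert_of_mem hj) i (mem_insert_of_mem hi) m (mem_insert_self m s) hij
          (hlt i hi)
        simp [← this, hx]
    have hinter : #(F m ∩ s.biUnion F) = ∑ i ∈ s, #(F i ∩ F m) := by
      rw [inter_biUnion, card_biUnion hdisj]
      simp_rw [inter_comm]
    have hpairs : ∀ i ∈ s, ∑ j ∈ insert m s with i < j, #(F i ∩ F j) =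
        ∑ j ∈ s with i < j, #(F i ∩ F j) + #(F i ∩ F m) := by
      intro i hi
      rw [filter_insert, if_pos (hlt i hi), sum_insert (fun h => hm (mem_filter.1 h).1), add_comm]
    have htop : ∑ j ∈ insert m s with m < j, #(F m ∩ F j) = 0 := by
      refine sum_eq_zero fun j hj => ?_
      simp only [mem_filter, mem_insert] at hj
      rcases hj with ⟨rfl | hj, hmj⟩
      · exact absurd hmj (lt_irrefl _)
      · exact absurd hmj (not_lt.2 (hlt j hj).le)
    rw [sum_insert hm, sum_insert hm, biUnion_insert, htop, zero_add, sum_congr rfl hpairs,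
      sum_add_distrib, ← hinter,
      ih fun i hi j hj k hk => h i (mem_insert_of_mem hi) j (mem_insert_of_mem hj) k
        (mem_insert_of_mem hk)]
    have := card_union_add_card_inter (F m) (s.biUnion F)
    omega

theorem wedgeJ_of_subset {K : Set (Finset V)} {J : V → ℕ} {σ τ : Finset (Σ i : V, Fin (J i))}
    (hστ : σ ⊆ τ) (hτ : τ ∈ wedgeJ K J) : σ ∈ wedgeJ K J :=
  fun S hS hSσ => hτ S hS (hSσ.trans hστ)

theorem forall_linearIndependent_iff_support_notMem {ι R M : Type*} [Fintype ι] [DecidableEq ι]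
    [Ring R] [DecidableEq R] [AddCommGroup M] [Module R M] {K : Set (Finset ι)}
    (hK : ∀ ⦃σ τ⦄, σ ⊆ τ → τ ∈ K → σ ∈ K) (f : ι → M) :
    (∀ σ ∈ K, LinearIndependent R fun i : σ => f i) ↔
      ∀ x : ι → R, x ≠ 0 → ∑ i, x i • f i = 0 → ({i | x i ≠ 0} : Finset ι) ∉ K := by
  constructor
  · intro h x hx hsum hsupp
    refine hx (funext fun i => by_contra fun hi => ?_)
    have hsum' : ∑ i : ({i | x i ≠ 0} : Finset ι), x i • f i = 0 := by
      rw [Finset.sum_coe_sort {i | x i ≠ 0} (fun i => x i • f i), Finset.sum_filter_of_ne]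
      · exact hsum
      · intro i _ hne h0
        exact hne (by rw [h0, zero_smul])
    exact hi (Fintype.linearIndependent_iff.1 (h _ hsupp) (fun i => x i) hsum'
      ⟨i, by simpa using hi⟩)
  · intro h σ hσ
    rw [Fintype.linearIndependent_iff]
    intro g hg i
    by_contra hgi
    let x : ι → R := fun j => if hj : j ∈ σ then g ⟨j, hj⟩ else 0
    have hx : x ≠ 0 := fun h0 => hgi (by simpa [x] using congrFun h0 i)
    have hsum : ∑ j, x j • f j = 0 := by
      rw [← Finset.sum_subset (Finset.subset_univ σ) (fun j _ hj => by simp [x, hj]),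
        ← Finset.sum_coe_sort σ]
      simpa [x] using hg
    refine h x hx hsum (hK (fun j hj => ?_) hσ)
    by_contra hjσ
    simp [x, hjσ] at hj

theorem minNonFace_pentagonComplex_iff (S : Finset (ZMod 5)) :
    MinNonFace pentagonComplex S ↔ ∃ i : ZMod 5, S = {i, i + 2} := by
  simp only [MinNonFace, pentagonComplex, Set.mem_ofPred_eq]
  revert S
  decide

theorem notMem_wedgeJ_pentagonComplex_iff {a : ZMod 5 → ℕ} (τ : Finset (Σ i : ZMod 5, Fin (a i))) :
    τ ∉ wedgeJ pentagonComplex a ↔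
      ∃ i : ZMod 5, ∀ w : Σ i : ZMod 5, Fin (a i), w.1 = i ∨ w.1 = i + 2 → w ∈ τ := by
  simp only [wedgeJ, Set.mem_ofPred_eq, minNonFace_pentagonComplex_iff, not_forall, not_not,
    exists_prop]
  constructor
  · rintro ⟨S, ⟨i, rfl⟩, hS⟩
    exact ⟨i, fun w hw => hS (by simpa [fullCopy] using hw)⟩
  · rintro ⟨i, hi⟩
    exact ⟨_, ⟨i, rfl⟩, fun w hw => hi w (by simpa [fullCopy] using hw)⟩

abbrev Vec3 := Fin 3 → ZMod 2

def spareBlock (k : Fin 3) : ZMod 5 := (k : ℕ) + 2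

theorem spareBlock_injective : Function.Injective spareBlock := by decide

theorem spareBlock_ne_zero (k : Fin 3) : spareBlock k ≠ 0 := by revert k; decide

theorem spareBlock_ne_one (k : Fin 3) : spareBlock k ≠ 1 := by revert k; decide

def IsCovered (X : ZMod 5 → Set Vec3) : Prop :=
  ∀ c : Vec3, c ≠ 0 → ∃ j : ZMod 5, ∀ x ∈ X j ∪ X (j + 2), c ⬝ᵥ x = 1

-- The maximal solutions of `IsCovered` with `Pi.single k 1 ∈ X (spareBlock k)`: one for each
-- diagonal, except that the diagonal `{2, 4}` joining two spare blocks carries two.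
def shape : Fin 6 → ZMod 5 → Finset Vec3 :=
  ![![{![1,0,1], ![1,1,0]}, {![0,1,1]}, {![1,0,0], ![1,1,1]}, {![0,1,0]}, {![0,0,1]}],
    ![{![1,0,1]}, {![1,1,1], ![0,1,1]}, {![1,0,0]}, {![0,1,0], ![1,1,0]}, {![0,0,1]}],
    ![{![1,1,1]}, {![1,0,1]}, {![1,0,0], ![1,1,0]}, {![0,1,0]}, {![0,0,1], ![0,1,1]}],
    ![{![1,0,1]}, {![1,1,1]}, {![1,0,0], ![1,1,0]}, {![0,1,0]}, {![0,0,1], ![0,1,1]}],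
    ![{![1,1,0], ![1,1,1]}, {![1,0,1]}, {![1,0,0]}, {![0,1,0], ![0,1,1]}, {![0,0,1]}],
    ![{![1,1,0]}, {![0,1,1], ![1,0,1]}, {![1,0,0]}, {![0,1,0]}, {![0,0,1], ![1,1,1]}]]

theorem exists_diagonal_shape (s : Fin 6) (c : Vec3) (hc : c ≠ 0) :
    ∃ j : ZMod 5, ∀ x ∈ shape s j ∪ shape s (j + 2), c ⬝ᵥ x = 1 := by
  revert s c
  decide

theorem isCovered_of_subset_shape {X : ZMod 5 → Set Vec3} (s : Fin 6)
    (hX : ∀ i, X i ⊆ shape s i) : IsCovered X := by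
  intro c hc
  obtain ⟨j, hj⟩ := exists_diagonal_shape s c hc
  refine ⟨j, fun x hx => hj x ?_⟩
  rcases hx with hx | hx
  · exact mem_union_left _ (hX j hx)
  · exact mem_union_right _ (hX (j + 2) hx)

-- Exhaustive search behind `IsCovered X → ∃ s, ∀ i, X i ⊆ shape s i`. Each entry `(c, i)` of
-- `fs` records the constraint `c ⬝ᵥ x = 1` on block `i`. Every nonzero `c` in turn is assigned
-- each diagonal `{j, j + 2}`; a branch is dropped once block `0` or `1` admits no vector or a spare
-- basis vector violates its constraints, and at the leaves every admissible vector must fit one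
-- shape.
def satisfies (fs : List (Vec3 × ZMod 5)) (i : ZMod 5) (x : Vec3) : Bool :=
  fs.all fun p => p.2 != i || p.1 ⬝ᵥ x == 1

def feasible (fs : List (Vec3 × ZMod 5)) : Bool :=
  decide ((∃ x, satisfies fs 0 x) ∧ (∃ x, satisfies fs 1 x) ∧
    ∀ k, satisfies fs (spareBlock k) (Pi.single k 1))

def allBranchesFit : List Vec3 → List (Vec3 × ZMod 5) → Bool
  | [], fs => decide (∃ s, ∀ i x, satisfies fs i x → x ∈ shape s i)
  | c :: cs, fs => ([0, 1, 2, 3, 4] : List (ZMod 5)).all fun j =>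
      let fs' := (c, j) :: (c, j + 2) :: fs
      !feasible fs' || allBranchesFit cs fs'

def nonzeroVecs : List Vec3 :=
  [![1,0,0], ![0,0,1], ![0,1,0], ![1,1,0], ![0,1,1], ![1,0,1], ![1,1,1]]

theorem allBranchesFit_nonzeroVecs : allBranchesFit nonzeroVecs [] = true := by decide +kernel

theorem satisfies_of_forall {X : ZMod 5 → Set Vec3} {fs : List (Vec3 × ZMod 5)}
    (hfs : ∀ p ∈ fs, ∀ x ∈ X p.2, p.1 ⬝ᵥ x = 1) {i : ZMod 5} {x : Vec3} (hx : x ∈ X i) :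
    satisfies fs i x = true := by
  simp only [satisfies, List.all_eq_true, Bool.or_eq_true, bne_iff_ne, ne_eq, beq_iff_eq]
  intro p hp
  by_cases h : p.2 = i
  · exact Or.inr (hfs p hp x (h ▸ hx))
  · exact Or.inl h

theorem exists_shape_of_allBranchesFit {X : ZMod 5 → Set Vec3} (h0 : (X 0).Nonempty)
    (h1 : (X 1).Nonempty) (he : ∀ k, Pi.single k 1 ∈ X (spareBlock k)) :
    ∀ cs fs, allBranchesFit cs fs = true → (∀ p ∈ fs, ∀ x ∈ X p.2, p.1 ⬝ᵥ x = 1) →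
      (∀ c ∈ cs, ∃ j, ∀ x ∈ X j ∪ X (j + 2), c ⬝ᵥ x = 1) → ∃ s, ∀ i, X i ⊆ shape s i
  | [], fs, hs, hfs, _ => by
    obtain ⟨s, hs⟩ := of_decide_eq_true hs
    exact ⟨s, fun i x hx => hs i x (satisfies_of_forall hfs hx)⟩
  | c :: cs, fs, hs, hfs, hcs => by
    obtain ⟨j, hj⟩ := hcs c List.mem_cons_self
    have hfs' : ∀ p ∈ (c, j) :: (c, j + 2) :: fs, ∀ x ∈ X p.2, p.1 ⬝ᵥ x = 1 := by
      simp only [List.mem_cons, forall_eq_or_imp]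
      exact ⟨fun x hx => hj x (Or.inl hx), fun x hx => hj x (Or.inr hx), hfs⟩
    have hfeasible : feasible ((c, j) :: (c, j + 2) :: fs) = true :=
      decide_eq_true ⟨⟨_, satisfies_of_forall hfs' h0.some_mem⟩,
        ⟨_, satisfies_of_forall hfs' h1.some_mem⟩, fun k => satisfies_of_forall hfs' (he k)⟩
    have hnext := List.all_eq_true.1 hs j ((by decide : ∀ j : ZMod 5, j ∈ [0, 1, 2, 3, 4]) j)
    dsimp only at hnext
    rw [hfeasible, Bool.not_true, Bool.false_or] at hnext
    exact exists_shape_of_allBranchesFit h0 h1 he cs _ hnext hfs'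
      fun c' hc' => hcs c' (List.mem_cons_of_mem _ hc')

theorem isCovered_iff_exists_shape {X : ZMod 5 → Set Vec3} (h0 : (X 0).Nonempty)
    (h1 : (X 1).Nonempty) (he : ∀ k, Pi.single k 1 ∈ X (spareBlock k)) :
    IsCovered X ↔ ∃ s, ∀ i, X i ⊆ shape s i :=
  ⟨fun hX => exists_shape_of_allBranchesFit h0 h1 he nonzeroVecs [] allBranchesFit_nonzeroVecs
      (by simp) fun c hc => hX c ((by decide : ∀ c ∈ nonzeroVecs, c ≠ 0) c hc),
    fun ⟨s, hs⟩ => isCovered_of_subset_shape s hs⟩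

def doubledBlocks : Fin 6 → ZMod 5 × ZMod 5 := ![(0, 2), (1, 3), (2, 4), (2, 4), (3, 0), (4, 1)]

theorem card_shape (s : Fin 6) (i : ZMod 5) :
    #(shape s i) = if i = (doubledBlocks s).1 ∨ i = (doubledBlocks s).2 then 2 else 1 := by
  revert s i
  decide

theorem doubledBlocks_ne (s : Fin 6) : (doubledBlocks s).1 ≠ (doubledBlocks s).2 := by
  revert s
  decide

theorem shape_inter_eq_empty_or (s s' s'' : Fin 6) (h : s < s') (h' : s' < s'') :
    shape s 0 ∩ shape s' 0 ∩ shape s'' 0 = ∅ ∨ shape s 1 ∩ shape s' 1 ∩ shape s'' 1 = ∅ := by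
  revert s s' s''
  decide

theorem shape_inter_cases (s s' : Fin 6) (h : s < s') :
    (shape s 0 ∩ shape s' 0 = ∅ ∨ shape s 1 ∩ shape s' 1 = ∅) ∨
      ∀ i, #(shape s i ∩ shape s' i) = 1 := by
  revert s s'
  decide

theorem sum_ite_card_shape_inter_eq_one :
    ∑ s : Fin 6, ∑ s' with s < s', (if ∀ i, #(shape s i ∩ shape s' i) = 1 then 1 else 0) = 5 := by
  decide

theorem prod_pow_ite_pair (m : ZMod 5 → ℕ) {j j' : ZMod 5} (hj : j ≠ j') :
    ∏ i, (if i = j ∨ i = j' then 2 else 1) ^ m i = 2 ^ (m j + m j') := by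
  rw [← prod_filter_mul_prod_filter_not univ (fun i => i = j ∨ i = j')]
  rw [show ({i | i = j ∨ i = j'} : Finset (ZMod 5)) = {j, j'} by ext; simp,
    prod_pair hj, prod_eq_one fun i hi => by simp [(mem_filter.1 hi).2], pow_add]
  simp

section Facet

variable (a : ZMod 5 → ℕ)

abbrev Vert := Σ i : ZMod 5, Fin (a i)

abbrev Space := Fin ((∑ i : ZMod 5, a i) - 3) → ZMod 2

variable {a} (ha : ∀ i, 0 < a i)

def spare (k : Fin 3) : Vert a :=
  ⟨spareBlock k, ⟨a (spareBlock k) - 1, Nat.sub_lt (ha _) one_pos⟩⟩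

@[simp] theorem spare_fst (k : Fin 3) : (spare ha k).1 = spareBlock k := rfl

theorem spare_injective : Function.Injective (spare ha) :=
  fun _ _ h => spareBlock_injective (congrArg Sigma.fst h)

def facet : Finset (Vert a) := (univ.image (spare ha))ᶜ

theorem mem_facet_iff {w : Vert a} : w ∈ facet ha ↔ ∀ k, spare ha k ≠ w := by
  simp [facet]

theorem card_facet : #(facet ha) = (∑ i : ZMod 5, a i) - 3 := by
  rw [facet, card_compl, card_image_of_injective _ (spare_injective ha)]
  simp

theorem mem_facet_of_fst {w : Vert a} (hw : ∀ k, spareBlock k ≠ w.1) : w ∈ facet ha :=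
  (mem_facet_iff ha).2 fun k h => hw k (h ▸ rfl)

theorem mk_zero_mem_facet : (⟨0, 0, ha 0⟩ : Vert a) ∈ facet ha :=
  mem_facet_of_fst ha spareBlock_ne_zero

theorem mk_one_mem_facet : (⟨1, 0, ha 1⟩ : Vert a) ∈ facet ha :=
  mem_facet_of_fst ha spareBlock_ne_one

theorem facet_mem_wedgeJ : facet ha ∈ wedgeJ pentagonComplex a := by
  by_contra h
  obtain ⟨i, hi⟩ := (notMem_wedgeJ_pentagonComplex_iff _).1 h
  have : ∀ i : ZMod 5, ∃ k, spareBlock k = i ∨ spareBlock k = i + 2 := by decide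
  obtain ⟨k, hk⟩ := this i
  exact (mem_facet_iff ha).1 (hi (spare ha k) hk) k rfl

noncomputable def facetEquiv : facet ha ≃ Fin ((∑ i : ZMod 5, a i) - 3) :=
  (facet ha).equivFinOfCardEq (card_facet ha)

def IsNormal (lam : Vert a → Space a) : Prop :=
  ∀ u : facet ha, lam u = Pi.single (facetEquiv ha u) 1

theorem sum_vert {M : Type*} [AddCommMonoid M] (f : Vert a → M) :
    ∑ w, f w = ∑ u : facet ha, f u + ∑ k, f (spare ha k) := by
  rw [← sum_compl_add_sum (univ.image (spare ha)), sum_image fun _ _ _ _ h => spare_injective ha h,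
    ← facet, sum_coe_sort]

theorem forall_vert {P : Vert a → Prop} :
    (∀ w, P w) ↔ (∀ u : facet ha, P u) ∧ ∀ k, P (spare ha k) := by
  refine ⟨fun h => ⟨fun u => h u, fun k => h _⟩, fun ⟨hu, hk⟩ w => ?_⟩
  by_cases hw : w ∈ facet ha
  · exact hu ⟨w, hw⟩
  · obtain ⟨k, rfl⟩ : ∃ k, spare ha k = w := by simpa [mem_facet_iff] using hw
    exact hk k

noncomputable def normalMap (r : facet ha → Vec3) : Vert a → Space a :=
  Function.extend (spare ha) (fun k m => r ((facetEquiv ha).symm m) k)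
    fun w => if h : w ∈ facet ha then Pi.single (facetEquiv ha ⟨w, h⟩) 1 else 0

noncomputable def coords (r : facet ha → Vec3) : Vert a → Vec3 :=
  Function.extend (spare ha) (fun k => Pi.single k 1)
    fun w => if h : w ∈ facet ha then r ⟨w, h⟩ else 0

theorem not_exists_spare_eq (u : facet ha) : ¬∃ k, spare ha k = u :=
  fun ⟨k, hk⟩ => (mem_facet_iff ha).1 u.2 k hk

@[simp] theorem normalMap_spare (r : facet ha → Vec3) (k : Fin 3) :
    normalMap ha r (spare ha k) = fun m => r ((facetEquiv ha).symm m) k :=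
  (spare_injective ha).extend_apply _ _ k

@[simp] theorem normalMap_facet (r : facet ha → Vec3) (u : facet ha) :
    normalMap ha r u = Pi.single (facetEquiv ha u) 1 := by
  rw [normalMap, Function.extend_apply' _ _ _ (not_exists_spare_eq ha u), dif_pos u.2]

theorem isNormal_normalMap (r : facet ha → Vec3) : IsNormal ha (normalMap ha r) :=
  normalMap_facet ha r

@[simp] theorem coords_spare (r : facet ha → Vec3) (k : Fin 3) :
    coords ha r (spare ha k) = Pi.single k 1 :=
  (spare_injective ha).extend_apply _ _ k

@[simp] theorem coords_facet (r : facet ha → Vec3) (u : facet ha) : coords ha r u = r u := by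
  rw [coords, Function.extend_apply' _ _ _ (not_exists_spare_eq ha u), dif_pos u.2]

theorem sum_smul_normalMap_eq_zero_iff (r : facet ha → Vec3) (x : Vert a → ZMod 2) :
    ∑ w, x w • normalMap ha r w = 0 ↔ ∀ w, x w = (fun k => x (spare ha k)) ⬝ᵥ coords ha r w := by
  set c : Vec3 := fun k => x (spare ha k)
  have hfacet : ∑ u : facet ha, x u • normalMap ha r u = fun m => x ((facetEquiv ha).symm m) := by
    ext m
    simp [Finset.sum_apply, Pi.single_apply, ← Equiv.symm_apply_eq]
  have hspare : ∑ k, x (spare ha k) • normalMap ha r (spare ha k) =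
      fun m => c ⬝ᵥ r ((facetEquiv ha).symm m) := by
    ext m
    simp [c, dotProduct, Finset.sum_apply]
  rw [sum_vert ha, hfacet, hspare, forall_vert ha, funext_iff]
  simp only [Pi.add_apply, Pi.zero_apply, CharTwo.add_eq_zero, coords_facet, coords_spare,
    dotProduct_single, mul_one, c, implies_true, and_true]
  exact ((facetEquiv ha).forall_congr_left (p := fun u : facet ha => x u = c ⬝ᵥ r u)).symm

theorem isNonsingularZ2_normalMap_iff (r : facet ha → Vec3) :
    IsNonsingularZ2 a (normalMap ha r) ↔ IsCovered fun i => coords ha r '' {w | w.1 = i} := by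
  have hZ2 : ∀ t : ZMod 2, t ≠ 0 ↔ t = 1 := by decide
  rw [IsNonsingularZ2, forall_linearIndependent_iff_support_notMem (fun _ _ => wedgeJ_of_subset)]
  constructor
  · intro h c hc
    set x : Vert a → ZMod 2 := fun w => c ⬝ᵥ coords ha r w
    have hxc : (fun k => x (spare ha k)) = c := by ext k; simp [x]
    have hx : x ≠ 0 := fun h0 => hc (hxc ▸ funext fun k => congrFun h0 (spare ha k))
    have hker : ∑ w, x w • normalMap ha r w = 0 := by
      rw [sum_smul_normalMap_eq_zero_iff, hxc]
      exact fun w => rfl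
    obtain ⟨j, hj⟩ := (notMem_wedgeJ_pentagonComplex_iff _).1 (h x hx hker)
    refine ⟨j, ?_⟩
    rintro _ (⟨w, hw, rfl⟩ | ⟨w, hw, rfl⟩)
    · simpa [x, hZ2] using hj w (Or.inl hw)
    · simpa [x, hZ2] using hj w (Or.inr hw)
  · intro h x hx hker
    rw [sum_smul_normalMap_eq_zero_iff] at hker
    set c : Vec3 := fun k => x (spare ha k)
    have hc : c ≠ 0 := fun h0 => hx (funext fun w => by simp [hker w, h0])
    obtain ⟨j, hj⟩ := h c hc
    rw [notMem_wedgeJ_pentagonComplex_iff]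
    refine ⟨j, fun w hw => ?_⟩
    have : coords ha r w ∈ (coords ha r '' {w | w.1 = j}) ∪ coords ha r '' {w | w.1 = j + 2} := by
      rcases hw with hw | hw
      · exact Or.inl ⟨w, hw, rfl⟩
      · exact Or.inr ⟨w, hw, rfl⟩
    simpa [hker w, hZ2] using hj _ this

theorem isNonsingularZ2_normalMap_iff_exists_shape (r : facet ha → Vec3) :
    IsNonsingularZ2 a (normalMap ha r) ↔ ∃ s, ∀ u : facet ha, r u ∈ shape s (u : Vert a).1 := by
  set X : ZMod 5 → Set Vec3 := fun i => coords ha r '' {w | w.1 = i}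
  have hX : ∀ w : Vert a, coords ha r w ∈ X w.1 := fun w => ⟨w, rfl, rfl⟩
  rw [isNonsingularZ2_normalMap_iff, isCovered_iff_exists_shape ⟨_, hX ⟨0, 0, ha 0⟩⟩
    ⟨_, hX ⟨1, 0, ha 1⟩⟩ fun k => coords_spare ha r k ▸ hX (spare ha k)]
  refine exists_congr fun s => ?_
  have hspare : ∀ k, Pi.single k 1 ∈ shape s (spareBlock k) := by revert s; decide
  constructor
  · intro h u
    simpa using h _ (hX u)
  · rintro h i _ ⟨w, rfl, rfl⟩
    revert w
    rw [forall_vert ha]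
    exact ⟨fun u => by simpa using h u, fun k => by simpa using hspare k⟩

def orbit (lam : Vert a → Space a) : Set (Vert a → Space a) :=
  {lam' | ∃ g : Space a ≃ₗ[ZMod 2] Space a, ∀ w, lam' w = g (lam w)}

theorem orbit_comp (g : Space a ≃ₗ[ZMod 2] Space a) (lam : Vert a → Space a) :
    orbit (fun w => g (lam w)) = orbit lam := by
  ext lam'
  constructor
  · rintro ⟨h, hh⟩
    exact ⟨g.trans h, hh⟩
  · rintro ⟨h, hh⟩
    exact ⟨g.symm.trans h, fun w => by simp [hh w]⟩

theorem isNonsingularZ2_comp {lam : Vert a → Space a} (h : IsNonsingularZ2 a lam)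
    (g : Space a ≃ₗ[ZMod 2] Space a) : IsNonsingularZ2 a fun w => g (lam w) :=
  fun σ hσ => (h σ hσ).map' g.toLinearMap g.ker

theorem exists_linearEquiv_isNormal {lam : Vert a → Space a} (h : IsNonsingularZ2 a lam) :
    ∃ g : Space a ≃ₗ[ZMod 2] Space a, IsNormal ha fun w => g (lam w) := by
  have hli : LinearIndependent (ZMod 2) fun u : facet ha => lam u := h _ (facet_mem_wedgeJ ha)
  have hcard : Fintype.card (facet ha) = Module.finrank (ZMod 2) (Space a) := by
    simp [card_facet]
  have : Nonempty (facet ha) := ⟨⟨_, mk_zero_mem_facet ha⟩⟩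
  let b := (Pi.basisFun (ZMod 2) _).reindex (facetEquiv ha).symm
  refine ⟨(basisOfLinearIndependentOfCardEqFinrank hli hcard).equiv b (Equiv.refl _), fun u => ?_⟩
  have hu := (basisOfLinearIndependentOfCardEqFinrank hli hcard).equiv_apply u b (Equiv.refl _)
  simpa [b] using hu

theorem eq_of_mem_orbit_of_isNormal {lam lam' : Vert a → Space a} (hlam : IsNormal ha lam)
    (hlam' : IsNormal ha lam') (h : lam' ∈ orbit lam) : lam' = lam := by
  obtain ⟨g, hg⟩ := h
  have hgid : g.toLinearMap = LinearMap.id := by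
    refine (Pi.basisFun (ZMod 2) _).ext fun m => ?_
    have := hg ((facetEquiv ha).symm m)
    rw [hlam, hlam', Equiv.apply_symm_apply] at this
    simpa using this.symm
  funext w
  rw [hg w]
  exact LinearMap.congr_fun hgid (lam w)

theorem eq_normalMap_of_isNormal {lam : Vert a → Space a} (hlam : IsNormal ha lam) :
    lam = normalMap ha fun u k => lam (spare ha k) (facetEquiv ha u) := by
  funext w
  revert w
  rw [forall_vert ha]
  exact ⟨fun u => by rw [hlam u, normalMap_facet], fun k => by ext m; simp⟩

theorem normalMap_injective : Function.Injective (normalMap ha) := by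
  intro r r' h
  funext u k
  simpa using congrFun (congrFun h (spare ha k)) (facetEquiv ha u)

theorem ncard_orbits :
    Set.ncard {C | ∃ lam, IsNonsingularZ2 a lam ∧ C = orbit lam} =
      Set.ncard {r : facet ha → Vec3 | IsNonsingularZ2 a (normalMap ha r)} := by
  have hset : {C | ∃ lam, IsNonsingularZ2 a lam ∧ C = orbit lam} =
      (fun r => orbit (normalMap ha r)) '' {r | IsNonsingularZ2 a (normalMap ha r)} := by
    ext C
    constructor
    · rintro ⟨lam, hlam, rfl⟩
      obtain ⟨g, hg⟩ := exists_linearEquiv_isNormal ha hlam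
      have hnormal := eq_normalMap_of_isNormal ha hg
      refine ⟨_, ?_, (congrArg orbit hnormal).symm.trans (orbit_comp g lam)⟩
      rw [Set.mem_ofPred_eq, ← hnormal]
      exact isNonsingularZ2_comp hlam g
    · rintro ⟨r, hr, rfl⟩
      exact ⟨_, hr, rfl⟩
  refine hset ▸ Set.InjOn.ncard_image fun r _ r' _ h => ?_
  refine normalMap_injective ha
    (eq_of_mem_orbit_of_isNormal ha (isNormal_normalMap ha r) (isNormal_normalMap ha r') ?_).symm
  rw [show orbit (normalMap ha r) = orbit (normalMap ha r') from h]
  exact ⟨LinearEquiv.refl _ _, fun _ => rfl⟩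

theorem card_block (i : ZMod 5) : #({w | w.1 = i} : Finset (Vert a)) = a i := by
  rw [← Fintype.card_subtype]
  simpa using Fintype.card_congr (Equiv.sigmaSubtype (β := fun i => Fin (a i)) i)

theorem card_facet_block_add (i : ZMod 5) :
    #{w ∈ facet ha | w.1 = i} + #({k | spareBlock k = i} : Finset (Fin 3)) = a i := by
  have hspare :
      #{w ∈ univ.image (spare ha) | w.1 = i} = #({k | spareBlock k = i} : Finset (Fin 3)) := by
    rw [filter_image, card_image_of_injective _ (spare_injective ha)]
    rfl
  rw [← hspare, ← card_union_of_disjoint (disjoint_filter_filter disjoint_compl_left),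
    ← filter_union, facet, union_comm, union_compl, card_block]

noncomputable def family (s : Fin 6) : Finset (facet ha → Vec3) :=
  Fintype.piFinset fun u => shape s (u : Vert a).1

theorem card_piFinset_block (T : ZMod 5 → Finset Vec3) :
    #(Fintype.piFinset fun u : facet ha => T (u : Vert a).1) =
      ∏ i, #(T i) ^ #{w ∈ facet ha | w.1 = i} := by
  rw [Fintype.card_piFinset, prod_coe_sort (facet ha) fun w => #(T w.1),
    ← prod_fiberwise' (facet ha) Sigma.fst fun i => #(T i)]
  simp

theorem sum_card_family : ∑ s, #(family ha s) = ∑ i, 2 ^ (a i + a (i + 3) - 1) := by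
  obtain ⟨m, hm⟩ : ∃ m : ZMod 5 → ℕ, ∀ i, #{w ∈ facet ha | w.1 = i} = m i := ⟨_, fun _ => rfl⟩
  have hsize : ∀ i, m i + #({k | spareBlock k = i} : Finset (Fin 3)) = a i :=
    fun i => hm i ▸ card_facet_block_add ha i
  have hspare : (#({k | spareBlock k = 0} : Finset (Fin 3)), #({k | spareBlock k = 1} : Finset _),
      #({k | spareBlock k = 2} : Finset _), #({k | spareBlock k = 3} : Finset _),
      #({k | spareBlock k = 4} : Finset _)) = (0, 0, 1, 1, 1) := by decide
  simp only [Prod.mk.injEq] at hspare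
  have hnum : (1 : ZMod 5) + 3 = 4 ∧ (2 : ZMod 5) + 3 = 0 ∧ (3 : ZMod 5) + 3 = 1 ∧
      (4 : ZMod 5) + 3 = 2 := by decide
  simp only [family, fun s => card_piFinset_block ha (shape s), hm, card_shape,
    fun s => prod_pow_ite_pair m (doubledBlocks_ne s)]
  rw [Fin.sum_univ_six, show ∀ f : ZMod 5 → ℕ, ∑ i, f i = f 0 + f 1 + f 2 + f 3 + f 4 from
    fun f => Fin.sum_univ_five f]
  simp only [doubledBlocks, hnum, zero_add]
  simp only [Matrix.cons_val, Fin.isValue]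
  obtain ⟨c0, c1, c2, c3, c4⟩ := hspare
  rw [← hsize 0, ← hsize 1, ← hsize 2, ← hsize 3, ← hsize 4, c0, c1, c2, c3, c4,
    show m 0 + 0 + (m 3 + 1) - 1 = m 3 + m 0 by omega,
    show m 1 + 0 + (m 4 + 1) - 1 = m 4 + m 1 by omega,
    show m 2 + 1 + (m 0 + 0) - 1 = m 0 + m 2 by omega,
    show m 3 + 1 + (m 1 + 0) - 1 = m 1 + m 3 by omega,
    show m 4 + 1 + (m 2 + 1) - 1 = m 2 + m 4 + 1 by omega, pow_succ]
  ring

theorem setOf_isNonsingularZ2_normalMap :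
    {r : facet ha → Vec3 | IsNonsingularZ2 a (normalMap ha r)} = ↑(univ.biUnion (family ha)) := by
  ext r
  simp [family, isNonsingularZ2_normalMap_iff_exists_shape]

theorem family_inter_inter_eq_empty {s s' s'' : Fin 6} (h : s < s') (h' : s' < s'') :
    family ha s ∩ family ha s' ∩ family ha s'' = ∅ := by
  simp only [family, ← Fintype.piFinset_inter, Fintype.piFinset_eq_empty]
  rcases shape_inter_eq_empty_or s s' s'' h h' with h0 | h1
  · exact ⟨⟨_, mk_zero_mem_facet ha⟩, h0⟩
  · exact ⟨⟨_, mk_one_mem_facet ha⟩, h1⟩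

theorem card_family_inter {s s' : Fin 6} (h : s < s') :
    #(family ha s ∩ family ha s') = if ∀ i, #(shape s i ∩ shape s' i) = 1 then 1 else 0 := by
  rw [family, family, ← Fintype.piFinset_inter,
    card_piFinset_block ha fun i => shape s i ∩ shape s' i]
  rcases shape_inter_cases s s' h with (h0 | h1) | h
  · rw [if_neg fun hall => by simpa [h0] using hall 0]
    have hpos : 0 < #{w ∈ facet ha | w.1 = 0} :=
      card_pos.2 ⟨_, mem_filter.2 ⟨mk_zero_mem_facet ha, rfl⟩⟩
    exact prod_eq_zero (mem_univ 0) (by rw [h0, card_empty, zero_pow hpos.ne'])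
  · rw [if_neg fun hall => by simpa [h1] using hall 1]
    have hpos : 0 < #{w ∈ facet ha | w.1 = 1} :=
      card_pos.2 ⟨_, mem_filter.2 ⟨mk_one_mem_facet ha, rfl⟩⟩
    exact prod_eq_zero (mem_univ 1) (by rw [h1, card_empty, zero_pow hpos.ne'])
  · simp [h]

theorem ncard_setOf_isNonsingularZ2_normalMap :
    Set.ncard {r : facet ha → Vec3 | IsNonsingularZ2 a (normalMap ha r)} =
      (∑ i, 2 ^ (a i + a (i + 3) - 1)) - 5 := by
  have := sum_card_eq_card_biUnion_add_sum_card_inter univ (family ha)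
    fun _ _ _ _ _ _ h h' => family_inter_inter_eq_empty ha h h'
  rw [sum_congr rfl fun s _ => sum_congr rfl fun s' hs' =>
      card_family_inter ha (mem_filter.1 hs').2, sum_ite_card_shape_inter_eq_one, sum_card_family] at this
  rw [setOf_isNonsingularZ2_normalMap, Set.ncard_coe_finset]
  omega

end Facet

end PentagonWedge

/-- The number of Davis–Januszkiewicz equivalence classes (orbits under automorphisms of
`ℤ₂ⁿ`, `n = a₁ + ⋯ + a₅ − 3`) of small covers over `P₅(a₁,…,a₅) = [a₁,a₃,a₅,a₂,a₄]` is
`2^{a₁+a₄−1} + 2^{a₂+a₅−1} + 2^{a₃+a₁−1} + 2^{a₄+a₂−1} + 2^{a₅+a₃−1} − 5`. -/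
theorem count_DJ_classes_over_pentagon_wedge (a : ZMod 5 → ℕ) (ha : ∀ i, 0 < a i) :
    Set.ncard
      {C : Set ((Σ i : ZMod 5, Fin (a i)) → (Fin ((∑ i : ZMod 5, a i) - 3) → ZMod 2)) |
        ∃ lam, IsNonsingularZ2 a lam ∧
          C = {lam' | ∃ g : (Fin ((∑ i : ZMod 5, a i) - 3) → ZMod 2) ≃ₗ[ZMod 2]
                (Fin ((∑ i : ZMod 5, a i) - 3) → ZMod 2),
              ∀ w, lam' w = g (lam w)}} =
      (∑ i : ZMod 5, 2 ^ (a i + a (i + 3) - 1)) - 5 :=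
  (PentagonWedge.ncard_orbits ha).trans (PentagonWedge.ncard_setOf_isNonsingularZ2_normalMap ha)
end
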